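/- arXiv:1603.04559 — 3 statements merged into one kernel-verified Lean document; each statement's English description precedes it below -/
import Mathlib

section
/- Let H be a finite simple graph, let k ∈ {0,1}, and let G be a graph obtained from H by subdividing one edge. If p is a real number such that φ(H − W) ≤ p for every set W of edges of H with |W| = k, then φ(G − W′) ≤ p for every set W′ of edges of G with |W′| = k. -/
open SimpleGraph

/-- The minimum size of a feedback vertex set of `G`. -/
noncomputable def phi {V : Type} (G : SimpleGraph V) : ℕ :=
  sInf {n : ℕ | ∃ S : Finset V, S.card = n ∧ (G.induce ((S : Set V)ᶜ)).IsAcyclic}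

/-- The graph obtained from `H` by subdividing the edge `uv` once: delete the edge `uv`
and add a new vertex (`none`) adjacent exactly to `u` and `v`. -/
def subdivideEdge {V : Type} (H : SimpleGraph V) (u v : V) : SimpleGraph (Option V) :=
  SimpleGraph.fromRel (fun x y =>
    (∃ p q : V, x = some p ∧ y = some q ∧ H.Adj p q ∧ s(p, q) ≠ s(u, v)) ∨
    (x = none ∧ (y = some u ∨ y = some v)))

/-- `a` has degree exactly two in `H`. -/
def HasDegreeTwo {V : Type} (H : SimpleGraph V) (a : V) : Prop :=
  ∃ x y : V, x ≠ y ∧ H.Adj a x ∧ H.Adj a y ∧ ∀ z : V, H.Adj a z → z = x ∨ z = y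

/-- The operation `∘` applied with two distinct edges `u₁v₁`, `u₂v₂` and a degree-two vertex `a`:
subdivide both edges (new vertices `inr 0`, `inr 1`), then add a new vertex `inr 2` adjacent to
`a` and the two subdivision vertices. -/
def circOpTwo {V : Type} (H : SimpleGraph V) (u₁ v₁ u₂ v₂ a : V) : SimpleGraph (V ⊕ Fin 3) :=
  SimpleGraph.fromRel (fun x y =>
    (∃ p q : V, x = Sum.inl p ∧ y = Sum.inl q ∧ H.Adj p q ∧
      s(p, q) ≠ s(u₁, v₁) ∧ s(p, q) ≠ s(u₂, v₂)) ∨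
    (x = Sum.inr 0 ∧ (y = Sum.inl u₁ ∨ y = Sum.inl v₁)) ∨
    (x = Sum.inr 1 ∧ (y = Sum.inl u₂ ∨ y = Sum.inl v₂)) ∨
    (x = Sum.inr 2 ∧ (y = Sum.inl a ∨ y = Sum.inr 0 ∨ y = Sum.inr 1)))

/-- The operation `∘` applied with `e₁ = e₂ = uv` and a degree-two vertex `a`: subdivide the
edge `uv` twice (replacing it by the path `u, inr 0, inr 1, v`), then add a new vertex `inr 2`
adjacent to `a` and the two subdivision vertices. -/
def circOpOne {V : Type} (H : SimpleGraph V) (u v a : V) : SimpleGraph (V ⊕ Fin 3) :=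
  SimpleGraph.fromRel (fun x y =>
    (∃ p q : V, x = Sum.inl p ∧ y = Sum.inl q ∧ H.Adj p q ∧ s(p, q) ≠ s(u, v)) ∨
    (x = Sum.inr 0 ∧ (y = Sum.inl u ∨ y = Sum.inr 1)) ∨
    (x = Sum.inr 1 ∧ y = Sum.inl v) ∨
    (x = Sum.inr 2 ∧ (y = Sum.inl a ∨ y = Sum.inr 0 ∨ y = Sum.inr 1)))

/-- `G` is obtained from `H` by one application of the operation `∘` at the degree-two
vertex `a`, using two (not necessarily distinct) edges of `H`. -/
def IsCircOp {V : Type} (H : SimpleGraph V) (a : V) (G : SimpleGraph (V ⊕ Fin 3)) : Prop :=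
  (∃ u₁ v₁ u₂ v₂ : V, H.Adj u₁ v₁ ∧ H.Adj u₂ v₂ ∧ s(u₁, v₁) ≠ s(u₂, v₂) ∧
      G = circOpTwo H u₁ v₁ u₂ v₂ a) ∨
  (∃ u v : V, H.Adj u v ∧ G = circOpOne H u v a)

/-- Membership (up to isomorphism) in the family `F_{i,j}`. -/
inductive IsInF : ∀ (i j : ℕ) {V : Type}, SimpleGraph V → Prop
  | cycle (i : ℕ) (hi : 3 ≤ i) : IsInF i 0 (SimpleGraph.cycleGraph i)
  | k4 : IsInF 1 1 (⊤ : SimpleGraph (Fin 4))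
  | subdiv {i j : ℕ} {V : Type} {H : SimpleGraph V} {u v : V}
      (huv : H.Adj u v) (hH : IsInF i j H) : IsInF (i + 1) j (subdivideEdge H u v)
  | op {i j : ℕ} {V : Type} {H : SimpleGraph V} {a : V} {G : SimpleGraph (V ⊕ Fin 3)}
      (ha : HasDegreeTwo H a) (hG : IsCircOp H a G) (hH : IsInF i j H) : IsInF i (j + 1) G
  | iso {i j : ℕ} {V W : Type} {H : SimpleGraph V} {G : SimpleGraph W}
      (e : Nonempty (G ≃g H)) (hH : IsInF i j H) : IsInF i j G

/-- `G` is a graph obtained from `H` by repeatedly (possibly zero times) subdividing edges. -/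
inductive IsSubdivisionOf : ∀ {V : Type}, SimpleGraph V → ∀ {W : Type}, SimpleGraph W → Prop
  | refl {V : Type} (G : SimpleGraph V) : IsSubdivisionOf G G
  | step {V W : Type} {H : SimpleGraph V} {G : SimpleGraph W} {u v : W}
      (huv : G.Adj u v) (h : IsSubdivisionOf H G) : IsSubdivisionOf H (subdivideEdge G u v)

/-- `G` contains an induced subdivision of `H`: some induced subgraph of `G` is isomorphic
to a graph obtained from `H` by repeatedly subdividing edges. -/
def ContainsInducedSubdivision {V W : Type} (G : SimpleGraph V) (H : SimpleGraph W) : Prop :=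
  ∃ (s : Set V) (U : Type) (K : SimpleGraph U),
    IsSubdivisionOf H K ∧ Nonempty (G.induce s ≃g K)

/-- The family `𝓕`: members of `F_{4,2} ∪ F_{4,3}` of girth at least five, together with
members `H` of `F_{3,2} ∪ F_{3,3}` having an edge `e` such that `H − e` has girth at least
five. -/
def InFamilyF {W : Type} (H : SimpleGraph W) : Prop :=
  ((IsInF 4 2 H ∨ IsInF 4 3 H) ∧ 5 ≤ H.girth) ∨
  ((IsInF 3 2 H ∨ IsInF 3 3 H) ∧ ∃ e ∈ H.edgeSet, 5 ≤ (H.deleteEdges {e}).girth)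

/-- `G` contains two vertex-disjoint cycles, each of length less than five. -/
def HasTwoDisjointShortCycles {V : Type} (G : SimpleGraph V) : Prop :=
  ∃ (u v : V) (c₁ : G.Walk u u) (c₂ : G.Walk v v), c₁.IsCycle ∧ c₂.IsCycle ∧
    c₁.length < 5 ∧ c₂.length < 5 ∧ ∀ x : V, x ∈ c₁.support → x ∉ c₂.support


/-!
A feedback vertex set `S` of `H` (or of `H - e`) stays, through `some`, a feedback vertex set of
the subdivided graph `G` (or of `G - e'`, where `e` is the edge of `H` on which `e'` lies). Outside
`S`, the new vertex `none` has at most two neighbours, and two of them are adjacent in `H` but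
not in `G`. Contracting `none` into one of its neighbours thus maps `G - S` into the forest
`H - S`, collapsing the contracted edge and sending every other edge to an edge that no further
edge maps onto; hence each edge of `G - S` is a bridge, because its image is one.
-/

open Function

namespace SimpleGraph

variable {α β : Type*} {A : SimpleGraph α} {B : SimpleGraph β}

theorem Reachable.map_of_adj_or_eq (f : α → β)
    (hf : ∀ a b, A.Adj a b → B.Adj (f a) (f b) ∨ f a = f b) {x y : α} (h : A.Reachable x y) :
    B.Reachable (f x) (f y) := by
  rw [reachable_iff_reflTransGen] at h ⊢
  refine Relation.ReflTransGen.lift' f (fun a b hab => ?_) _ _ h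
  rcases hf a b hab with h | h
  · exact .single h
  · exact (show Relation.ReflTransGen B.Adj (f a) (f b) from h ▸ .refl)

theorem IsAcyclic.isBridge_of_map (hB : B.IsAcyclic) (f : α → β) {x y : α}
    (hxy : B.Adj (f x) (f y))
    (hf : ∀ a b, (A.deleteEdges {s(x, y)}).Adj a b →
      (B.deleteEdges {s(f x, f y)}).Adj (f a) (f b) ∨ f a = f b) :
    A.IsBridge s(x, y) :=
  isBridge_iff.mpr fun h => isAcyclic_iff_forall_adj_isBridge.mp hB hxy (h.map_of_adj_or_eq f hf)

theorem isBridge_of_forall_adj_eq {x y : α} (hxy : x ≠ y) (hx : ∀ z, A.Adj x z → z = y) :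
    A.IsBridge s(x, y) := by
  refine isBridge_iff.mpr fun h => hxy.symm ?_
  -- `(· = x)` is constant along the edges of `A - xy`, as `x` has no other neighbour.
  have := reachable_bot.mp (h.map_of_adj_or_eq (B := ⊥) (· = x) fun a b hab => Or.inr ?_)
  · simpa using this.symm
  · have hab' := (deleteEdges_adj ..).mp hab
    refine propext ⟨?_, ?_⟩ <;> rintro rfl
    · exact (hab'.2 (by rw [hx b hab'.1]; rfl)).elim
    · exact (hab'.2 (by rw [hx a hab'.1.symm, Sym2.eq_swap]; rfl)).elim

section InsertVertex

variable {g : β → α} {n : α}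

theorem IsAcyclic.isBridge_of_retraction (hB : B.IsAcyclic) (hn : ∀ x, x ≠ n → ∃ p, g p = x)
    (hadj : ∀ p q, A.Adj (g p) (g q) → B.Adj p q) {f : α → β} (hfg : ∀ p, f (g p) = p)
    {x y : α} (hxy : B.Adj (f x) (f y))
    (hgg : ∀ a b, (A.deleteEdges {s(x, y)}).Adj (g a) (g b) → s(a, b) ≠ s(f x, f y))
    (hng : ∀ b, (A.deleteEdges {s(x, y)}).Adj n (g b) →
      b = f n ∨ B.Adj (f n) b ∧ s(f n, b) ≠ s(f x, f y)) :
    A.IsBridge s(x, y) := by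
  have hside : ∀ b, (A.deleteEdges {s(x, y)}).Adj n (g b) →
      (B.deleteEdges {s(f x, f y)}).Adj (f n) (f (g b)) ∨ f n = f (g b) := by
    intro b hb
    rw [hfg]
    rcases hng b hb with h | hcb
    · exact Or.inr h.symm
    · exact Or.inl ((deleteEdges_adj ..).mpr hcb)
  refine hB.isBridge_of_map f hxy fun a b hab => ?_
  rcases eq_or_ne a n with rfl | ha <;> rcases eq_or_ne b a with rfl | hb
  · exact absurd rfl hab.ne
  · obtain ⟨b, rfl⟩ := hn b (fun h => hb h)
    exact hside b hab
  · exact absurd rfl hab.ne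
  · obtain ⟨a, rfl⟩ := hn a ha
    rcases eq_or_ne b n with rfl | hbn
    · exact (hside a hab.symm).imp (·.symm) (·.symm)
    · obtain ⟨b, rfl⟩ := hn b hbn
      rw [hfg, hfg]
      exact Or.inl ((deleteEdges_adj ..).mpr ⟨hadj a b hab.1, hgg a b hab⟩)

theorem exists_retraction (hg : Injective g) (hgn : ∀ p, g p ≠ n) (c : β) :
    ∃ f : α → β, (∀ p, f (g p) = p) ∧ f n = c := by
  classical
  exact ⟨extend g id fun _ => c, hg.extend_apply _ _,
    extend_apply' _ _ _ fun ⟨p, hp⟩ => hgn p hp⟩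

theorem IsAcyclic.isBridge_of_insertVertex_of_adj (hB : B.IsAcyclic)
    (hn : ∀ x, x ≠ n → ∃ p, g p = x) (hadj : ∀ p q, A.Adj (g p) (g q) → B.Adj p q)
    (hnbr : ∀ p q, A.Adj n (g p) → A.Adj n (g q) → p ≠ q →
      B.Adj p q ∧ ¬A.Adj (g p) (g q))
    {f : α → β} (hfg : ∀ p, f (g p) = p) (hf : A.Adj n (g (f n))) {q : β}
    (hq : A.Adj n (g q)) (hfq : f n ≠ q) :
    A.IsBridge s(n, g q) := by
  obtain ⟨hBfq, hAfq⟩ := hnbr _ q hf hq hfq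
  refine hB.isBridge_of_retraction hn hadj hfg ?_ (fun a b hab => ?_) fun b hb => ?_
    <;> simp only [hfg]
  · exact hBfq
  · exact fun h => hAfq ((A.adj_congr_of_sym2 (congrArg (Sym2.map g) h)).mp hab.1)
  · refine or_iff_not_imp_left.mpr fun hbf => ⟨(hnbr _ b hf hb.1 (Ne.symm hbf)).1, fun h => ?_⟩
    exact ((deleteEdges_adj ..).mp hb).2 (by rw [Sym2.congr_right.mp h]; rfl)

theorem IsAcyclic.isBridge_of_insertVertex_map (hB : B.IsAcyclic)
    (hn : ∀ x, x ≠ n → ∃ p, g p = x) (hadj : ∀ p q, A.Adj (g p) (g q) → B.Adj p q)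
    (hnbr : ∀ p q, A.Adj n (g p) → A.Adj n (g q) → p ≠ q →
      B.Adj p q ∧ ¬A.Adj (g p) (g q))
    {f : α → β} (hfg : ∀ p, f (g p) = p) (hf : ∀ b, A.Adj n (g b) → A.Adj n (g (f n)))
    {p q : β} (hpq : A.Adj (g p) (g q)) :
    A.IsBridge s(g p, g q) := by
  refine hB.isBridge_of_retraction hn hadj hfg ?_ (fun a b hab => ?_) fun b hb => ?_
    <;> simp only [hfg]
  · exact hadj p q hpq
  · exact fun h => ((deleteEdges_adj ..).mp hab).2 (congrArg (Sym2.map g) h)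
  · refine or_iff_not_imp_left.mpr fun hbf => ?_
    obtain ⟨hBfb, hAfb⟩ := hnbr _ b (hf b hb.1) hb.1 (Ne.symm hbf)
    exact ⟨hBfb, fun h => hAfb ((A.adj_congr_of_sym2 (congrArg (Sym2.map g) h)).mpr hpq)⟩

theorem IsAcyclic.of_insertVertex (hB : B.IsAcyclic) (hg : Injective g) (hgn : ∀ p, g p ≠ n)
    (hn : ∀ x, x ≠ n → ∃ p, g p = x) (hadj : ∀ p q, A.Adj (g p) (g q) → B.Adj p q)
    (hnbr : ∀ p q, A.Adj n (g p) → A.Adj n (g q) → p ≠ q →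
      B.Adj p q ∧ ¬A.Adj (g p) (g q)) :
    A.IsAcyclic := by
  refine isAcyclic_iff_forall_adj_isBridge.mpr fun x y hxy => ?_
  wlog hy : y ≠ n generalizing x y
  · rw [Sym2.eq_swap]
    exact this y x hxy.symm fun hx => hxy.ne (hx.trans (not_not.mp hy).symm)
  obtain ⟨q, rfl⟩ := hn y hy
  rcases eq_or_ne x n with rfl | hx
  · by_cases hp : ∃ p, A.Adj x (g p) ∧ p ≠ q
    · obtain ⟨p, hxp, hpq⟩ := hp
      obtain ⟨f, hfg, rfl⟩ := exists_retraction hg hgn p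
      exact hB.isBridge_of_insertVertex_of_adj hn hadj hnbr hfg hxp hxy hpq
    · push Not at hp
      refine isBridge_of_forall_adj_eq hxy.ne fun z hz => ?_
      obtain ⟨p, rfl⟩ := hn z fun h => hz.ne h.symm
      rw [hp p hz]
  · obtain ⟨p, rfl⟩ := hn x hx
    obtain ⟨c, hc⟩ : ∃ c, ∀ b, A.Adj n (g b) → A.Adj n (g c) := by
      by_cases h : ∃ c, A.Adj n (g c)
      · exact h.imp fun c hc _ _ => hc
      · exact ⟨p, fun b hb => absurd ⟨b, hb⟩ h⟩
    obtain ⟨f, hfg, rfl⟩ := exists_retraction hg hgn c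
    exact hB.isBridge_of_insertVertex_map hn hadj hnbr hfg hc hxy

end InsertVertex

end SimpleGraph

section FeedbackVertexSet

variable {V : Type}

theorem phi_le_card {G : SimpleGraph V} {S : Finset V} (hS : (G.induce (S : Set V)ᶜ).IsAcyclic) :
    phi G ≤ S.card :=
  Nat.sInf_le ⟨S, rfl, hS⟩

theorem exists_card_eq_phi [Fintype V] (G : SimpleGraph V) :
    ∃ S : Finset V, S.card = phi G ∧ (G.induce (S : Set V)ᶜ).IsAcyclic :=
  Nat.sInf_mem (s := {n | ∃ S : Finset V, S.card = n ∧ (G.induce (S : Set V)ᶜ).IsAcyclic})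
    ⟨_, Finset.univ, rfl, fun w _ _ => absurd w.2 (by simp)⟩

theorem phi_le_of_insertVertex [Fintype V] {G : SimpleGraph (Option V)} {H : SimpleGraph V}
    (hadj : ∀ p q, G.Adj (some p) (some q) → H.Adj p q)
    (hnbr : ∀ p q, G.Adj none (some p) → G.Adj none (some q) → p ≠ q →
      H.Adj p q ∧ ¬G.Adj (some p) (some q)) :
    phi G ≤ phi H := by
  obtain ⟨S, hcard, hS⟩ := exists_card_eq_phi H
  rw [← hcard, ← S.card_map .some]
  let T : Set (Option V) := ((S.map .some : Finset (Option V)) : Set (Option V))ᶜ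
  let g : ((S : Set V)ᶜ : Set V) → T := fun p =>
    ⟨some p.1, by simpa [T] using Set.notMem_of_mem_compl p.2⟩
  refine phi_le_card (hS.of_insertVertex (g := g) (n := ⟨none, by simp⟩) ?_ ?_ ?_
    (fun _ _ h => hadj _ _ h) fun p q hp hq hpq => ?_)
  · exact fun p q h => Subtype.ext (Option.some_injective _ (congrArg Subtype.val h))
  · exact fun p h => Option.some_ne_none _ (congrArg Subtype.val h)
  · rintro ⟨_ | x, hx⟩ hne
    · exact absurd rfl hne
    · exact ⟨⟨x, by simpa [T] using hx⟩, rfl⟩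
  · exact hnbr _ _ hp hq fun h => hpq (Subtype.ext h)

end FeedbackVertexSet

section Subdivision

variable {V : Type} {H : SimpleGraph V} {u v : V}

theorem subdivideEdge_adj_some_some {p q : V} :
    (subdivideEdge H u v).Adj (some p) (some q) ↔ H.Adj p q ∧ s(p, q) ≠ s(u, v) := by
  rw [subdivideEdge, fromRel_adj]
  simp only [Option.some.injEq, reduceCtorEq, false_and, or_false, exists_and_left,
    exists_eq_left', ne_eq]
  rw [H.adj_comm q, Sym2.eq_swap (a := q), or_self]
  exact and_iff_right_of_imp fun h => h.1.ne

theorem subdivideEdge_adj_none_some {p : V} :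
    (subdivideEdge H u v).Adj none (some p) ↔ p = u ∨ p = v := by
  simp [subdivideEdge]

theorem subdivideEdge_not_adj_none_none : ¬(subdivideEdge H u v).Adj none none := by
  simp [subdivideEdge]

theorem subdivideEdge_eq_of_adj_none {p q : V} (hp : (subdivideEdge H u v).Adj none (some p))
    (hq : (subdivideEdge H u v).Adj none (some q)) (hpq : p ≠ q) : s(p, q) = s(u, v) := by
  rw [subdivideEdge_adj_none_some] at hp hq
  exact Sym2.eq_of_ne_mem hpq (Sym2.mem_mk_left p q) (Sym2.mem_mk_right p q)
    (Sym2.mem_iff.mpr hp) (Sym2.mem_iff.mpr hq)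

variable [Fintype V]

theorem phi_subdivideEdge_le (huv : H.Adj u v) : phi (subdivideEdge H u v) ≤ phi H := by
  refine phi_le_of_insertVertex (fun p q h => (subdivideEdge_adj_some_some.mp h).1)
    fun p q hp hq hpq => ?_
  have hpq := subdivideEdge_eq_of_adj_none hp hq hpq
  rw [subdivideEdge_adj_some_some, ← mem_edgeSet, hpq]
  exact ⟨huv, fun h => h.2 rfl⟩

theorem phi_deleteEdges_subdivideEdge_some_le (huv : H.Adj u v) {p q : V}
    (hpq : s(p, q) ≠ s(u, v)) :
    phi ((subdivideEdge H u v).deleteEdges {s(some p, some q)}) ≤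
      phi (H.deleteEdges {s(p, q)}) := by
  refine phi_le_of_insertVertex (fun a b h => ?_) fun a b ha hb hab => ?_
  · rw [deleteEdges_adj, subdivideEdge_adj_some_some] at h
    exact (deleteEdges_adj ..).mpr ⟨h.1.1, fun hab => h.2 (congrArg (Sym2.map some) hab)⟩
  · have hab := subdivideEdge_eq_of_adj_none (deleteEdges_le _ ha) (deleteEdges_le _ hb) hab
    rw [deleteEdges_adj, ← mem_edgeSet, hab, deleteEdges_adj, subdivideEdge_adj_some_some, hab]
    exact ⟨⟨huv, hpq.symm⟩, fun h => h.1.2 rfl⟩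

theorem phi_deleteEdges_subdivideEdge_none_le {t : V} (ht : t = u ∨ t = v) :
    phi ((subdivideEdge H u v).deleteEdges {s(none, some t)}) ≤
      phi (H.deleteEdges {s(u, v)}) := by
  refine phi_le_of_insertVertex (fun a b h => ?_) fun a b ha hb hab => ?_
  · rw [deleteEdges_adj, subdivideEdge_adj_some_some] at h
    exact (deleteEdges_adj ..).mpr h.1
  · simp only [deleteEdges_adj, subdivideEdge_adj_none_some, Set.mem_singleton_iff] at ha hb
    grind

theorem exists_phi_deleteEdges_subdivideEdge_le (huv : H.Adj u v) {e : Sym2 (Option V)}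
    (he : e ∈ (subdivideEdge H u v).edgeSet) :
    ∃ e₀ ∈ H.edgeSet,
      phi ((subdivideEdge H u v).deleteEdges {e}) ≤ phi (H.deleteEdges {e₀}) := by
  induction e using Sym2.ind with | _ x y => ?_
  rcases x with _ | p <;> rcases y with _ | q
  · exact absurd he subdivideEdge_not_adj_none_none
  · exact ⟨_, huv, phi_deleteEdges_subdivideEdge_none_le (subdivideEdge_adj_none_some.mp he)⟩
  · rw [Sym2.eq_swap]
    exact ⟨_, huv,
      phi_deleteEdges_subdivideEdge_none_le (subdivideEdge_adj_none_some.mp he.symm)⟩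
  · obtain ⟨hpq, hne⟩ := subdivideEdge_adj_some_some.mp he
    exact ⟨_, hpq, phi_deleteEdges_subdivideEdge_some_le huv hne⟩

end Subdivision

/-- If `G` is obtained from a finite simple graph `H` by subdividing one edge,
`k ∈ {0,1}`, and `φ(H − W) ≤ p` for every set `W` of edges of `H` with `|W| = k`, then
`φ(G − W′) ≤ p` for every set `W′` of edges of `G` with `|W′| = k`. -/
theorem statement_0 {V : Type} [Fintype V] (H : SimpleGraph V) (k : ℕ) (hk : k = 0 ∨ k = 1)
    (u v : V) (huv : H.Adj u v) (p : ℝ)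
    (hH : ∀ W : Set (Sym2 V), W ⊆ H.edgeSet → W.ncard = k →
      (phi (H.deleteEdges W) : ℝ) ≤ p) :
    ∀ W' : Set (Sym2 (Option V)), W' ⊆ (subdivideEdge H u v).edgeSet → W'.ncard = k →
      (phi ((subdivideEdge H u v).deleteEdges W') : ℝ) ≤ p := by
  intro W' hW' hcard
  rcases hk with rfl | rfl
  · obtain rfl : W' = ∅ := (Set.ncard_eq_zero W'.toFinite).mp hcard
    have h := hH ∅ (Set.empty_subset _) (Set.ncard_empty _)
    rw [deleteEdges_empty] at h ⊢
    exact (Nat.cast_le.mpr (phi_subdivideEdge_le huv)).trans h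
  · obtain ⟨e, rfl⟩ := Set.ncard_eq_one.mp hcard
    obtain ⟨e₀, he₀, hle⟩ := exists_phi_deleteEdges_subdivideEdge_le huv (hW' rfl)
    exact (Nat.cast_le.mpr hle).trans (hH {e₀} (by simpa using he₀) (Set.ncard_singleton e₀))
end

section
/- Every graph in the family F_{3,1} is isomorphic to one of the following three graphs: K₄ with one edge subdivided twice, K₄ with two adjacent edges each subdivided once, or K₄ with two non-adjacent edges each subdivided once; and each of these three graphs belongs to F_{3,1}. Moreover, among these three graphs, the one obtained from K₄ by subdividing each of the two edges of a perfect matching once is the only one with girth at least four. -/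
open SimpleGraph

/-- `K₄⁺`: the graph obtained from `K₄` by subdividing the edge `01` once. -/
def K4plus : SimpleGraph (Option (Fin 4)) :=
  subdivideEdge (⊤ : SimpleGraph (Fin 4)) 0 1

/-- `K₄` with one edge subdivided twice. -/
def K4subTwice : SimpleGraph (Option (Option (Fin 4))) :=
  subdivideEdge K4plus (some 0) none

/-- `K₄` with two adjacent edges each subdivided once. -/
def K4subAdj : SimpleGraph (Option (Option (Fin 4))) :=
  subdivideEdge K4plus (some 0) (some 2)

/-- `K₄` with the two edges of a perfect matching each subdivided once. -/
def K4subMatching : SimpleGraph (Option (Option (Fin 4))) :=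
  subdivideEdge K4plus (some 2) (some 3)


-- ===== auxiliary development =====
set_option synthInstance.maxSize 8000
set_option synthInstance.maxHeartbeats 1000000
set_option maxHeartbeats 1000000
open SimpleGraph

instance instDecSubdiv {V : Type} [DecidableEq V] [Fintype V] (H : SimpleGraph V)
    [DecidableRel H.Adj] (u v : V) : DecidableRel (subdivideEdge H u v).Adj := fun x y =>
  decidable_of_iff _ (SimpleGraph.fromRel_adj _ x y).symm

instance instDecCircTwo {V : Type} [DecidableEq V] [Fintype V] (H : SimpleGraph V)
    [DecidableRel H.Adj] (u₁ v₁ u₂ v₂ a : V) : DecidableRel (circOpTwo H u₁ v₁ u₂ v₂ a).Adj :=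
  fun x y => decidable_of_iff _ (SimpleGraph.fromRel_adj _ x y).symm

instance instDecCircOne {V : Type} [DecidableEq V] [Fintype V] (H : SimpleGraph V)
    [DecidableRel H.Adj] (u v a : V) : DecidableRel (circOpOne H u v a).Adj :=
  fun x y => decidable_of_iff _ (SimpleGraph.fromRel_adj _ x y).symm

instance : DecidableRel K4plus.Adj := inferInstanceAs (DecidableRel (subdivideEdge _ _ _).Adj)
instance : DecidableRel K4subTwice.Adj := inferInstanceAs (DecidableRel (subdivideEdge _ _ _).Adj)
instance : DecidableRel K4subAdj.Adj := inferInstanceAs (DecidableRel (subdivideEdge _ _ _).Adj)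
instance : DecidableRel K4subMatching.Adj := inferInstanceAs (DecidableRel (subdivideEdge _ _ _).Adj)

/-- build an iso from an equiv plus adjacency compatibility -/
def mkIso {V W : Type} {G : SimpleGraph V} {H : SimpleGraph W} (f : V ≃ W)
    (h : ∀ a b, H.Adj (f a) (f b) ↔ G.Adj a b) : G ≃g H :=
  ⟨f, fun {a b} => h a b⟩

def prm (v w : Fin 6 → Fin 6) (h1 : Function.LeftInverse w v)
    (h2 : Function.RightInverse w v) : Fin 6 ≃ Fin 6 := ⟨v, w, h1, h2⟩

def toO : Fin 6 → Option (Option (Fin 4)) :=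
  ![some (some 0), some (some 1), some (some 2), some (some 3), some none, none]

def fromO : Option (Option (Fin 4)) → Fin 6
  | none => 5
  | some none => 4
  | some (some k) => ⟨k.1, by omega⟩

def cIdx : Fin 6 ≃ Option (Option (Fin 4)) := ⟨toO, fromO, by decide, by decide⟩

open SimpleGraph in
lemma sym2_eq_iff_of_inj {V W : Type} {f : V → W} (hf : Function.Injective f) (a b c d : V) :
    s(f a, f b) = s(f c, f d) ↔ s(a, b) = s(c, d) := by
  rw [← Sym2.map_pair_eq, ← Sym2.map_pair_eq, (Sym2.map.injective hf).eq_iff]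

open SimpleGraph in
def fromRelIso {V W : Type} (f : V ≃ W) (r : V → V → Prop) (r' : W → W → Prop)
    (h : ∀ a b, r' (f a) (f b) ↔ r a b) :
    (SimpleGraph.fromRel r) ≃g (SimpleGraph.fromRel r') :=
  mkIso f (fun a b => by
    simp only [SimpleGraph.fromRel_adj, h, ne_eq, EmbeddingLike.apply_eq_iff_eq])

open SimpleGraph in
theorem subdivideEdge_map {V W : Type} {G : SimpleGraph V} {H : SimpleGraph W} (e : G ≃g H)
    (u v : V) : Nonempty (subdivideEdge G u v ≃g subdivideEdge H (e u) (e v)) := by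
  refine ⟨fromRelIso e.toEquiv.optionCongr _ _ ?_⟩
  rintro (_ | a) (_ | b) <;>
    simp [e.map_adj_iff, sym2_eq_iff_of_inj e.toEquiv.injective,
      e.toEquiv.injective.eq_iff, eq_comm] <;> tauto

open SimpleGraph in
theorem circOpTwo_map {V W : Type} {G : SimpleGraph V} {H : SimpleGraph W} (e : G ≃g H)
    (u₁ v₁ u₂ v₂ a : V) :
    Nonempty (circOpTwo G u₁ v₁ u₂ v₂ a ≃g circOpTwo H (e u₁) (e v₁) (e u₂) (e v₂) (e a)) := by
  refine ⟨fromRelIso (Equiv.sumCongr e.toEquiv (Equiv.refl (Fin 3))) _ _ ?_⟩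
  rintro (p | i) (q | j) <;>
    simp [e.map_adj_iff, sym2_eq_iff_of_inj e.toEquiv.injective,
      e.toEquiv.injective.eq_iff, eq_comm] <;> tauto

open SimpleGraph in
theorem circOpOne_map {V W : Type} {G : SimpleGraph V} {H : SimpleGraph W} (e : G ≃g H)
    (u v a : V) :
    Nonempty (circOpOne G u v a ≃g circOpOne H (e u) (e v) (e a)) := by
  refine ⟨fromRelIso (Equiv.sumCongr e.toEquiv (Equiv.refl (Fin 3))) _ _ ?_⟩
  rintro (p | i) (q | j) <;>
    simp [e.map_adj_iff, sym2_eq_iff_of_inj e.toEquiv.injective,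
      e.toEquiv.injective.eq_iff, eq_comm] <;> tauto
open SimpleGraph
theorem ot_01020 : Nonempty (circOpTwo (cycleGraph 3) 0 1 0 2 0 ≃g K4subTwice) :=
  ⟨mkIso (finSumFinEquiv.trans ((prm ![2,4,5,1,0,3] ![4,3,0,5,1,2] (by decide) (by decide)).trans cIdx)) (by decide)⟩
theorem ot_01021 : Nonempty (circOpTwo (cycleGraph 3) 0 1 0 2 1 ≃g K4subAdj) :=
  ⟨mkIso (finSumFinEquiv.trans ((prm ![4,2,5,1,0,3] ![4,3,1,5,0,2] (by decide) (by decide)).trans cIdx)) (by decide)⟩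
theorem ot_01022 : Nonempty (circOpTwo (cycleGraph 3) 0 1 0 2 2 ≃g K4subAdj) :=
  ⟨mkIso (finSumFinEquiv.trans ((prm ![4,5,2,0,1,3] ![3,4,2,5,0,1] (by decide) (by decide)).trans cIdx)) (by decide)⟩
theorem ot_01120 : Nonempty (circOpTwo (cycleGraph 3) 0 1 1 2 0 ≃g K4subAdj) :=
  ⟨mkIso (finSumFinEquiv.trans ((prm ![1,5,4,2,0,3] ![4,0,3,5,2,1] (by decide) (by decide)).trans cIdx)) (by decide)⟩
theorem ot_01121 : Nonempty (circOpTwo (cycleGraph 3) 0 1 1 2 1 ≃g K4subTwice) :=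
  ⟨mkIso (finSumFinEquiv.trans ((prm ![4,2,5,1,0,3] ![4,3,1,5,0,2] (by decide) (by decide)).trans cIdx)) (by decide)⟩
theorem ot_01122 : Nonempty (circOpTwo (cycleGraph 3) 0 1 1 2 2 ≃g K4subAdj) :=
  ⟨mkIso (finSumFinEquiv.trans ((prm ![4,5,1,0,2,3] ![3,2,4,5,0,1] (by decide) (by decide)).trans cIdx)) (by decide)⟩
theorem ot_01200 : Nonempty (circOpTwo (cycleGraph 3) 0 1 2 0 0 ≃g K4subTwice) :=
  ⟨mkIso (finSumFinEquiv.trans ((prm ![2,4,5,1,0,3] ![4,3,0,5,1,2] (by decide) (by decide)).trans cIdx)) (by decide)⟩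
theorem ot_01201 : Nonempty (circOpTwo (cycleGraph 3) 0 1 2 0 1 ≃g K4subAdj) :=
  ⟨mkIso (finSumFinEquiv.trans ((prm ![4,2,5,1,0,3] ![4,3,1,5,0,2] (by decide) (by decide)).trans cIdx)) (by decide)⟩
theorem ot_01202 : Nonempty (circOpTwo (cycleGraph 3) 0 1 2 0 2 ≃g K4subAdj) :=
  ⟨mkIso (finSumFinEquiv.trans ((prm ![4,5,2,0,1,3] ![3,4,2,5,0,1] (by decide) (by decide)).trans cIdx)) (by decide)⟩
theorem ot_01210 : Nonempty (circOpTwo (cycleGraph 3) 0 1 2 1 0 ≃g K4subAdj) :=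
  ⟨mkIso (finSumFinEquiv.trans ((prm ![1,5,4,2,0,3] ![4,0,3,5,2,1] (by decide) (by decide)).trans cIdx)) (by decide)⟩
theorem ot_01211 : Nonempty (circOpTwo (cycleGraph 3) 0 1 2 1 1 ≃g K4subTwice) :=
  ⟨mkIso (finSumFinEquiv.trans ((prm ![4,2,5,1,0,3] ![4,3,1,5,0,2] (by decide) (by decide)).trans cIdx)) (by decide)⟩
theorem ot_01212 : Nonempty (circOpTwo (cycleGraph 3) 0 1 2 1 2 ≃g K4subAdj) :=
  ⟨mkIso (finSumFinEquiv.trans ((prm ![4,5,1,0,2,3] ![3,2,4,5,0,1] (by decide) (by decide)).trans cIdx)) (by decide)⟩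
theorem ot_02010 : Nonempty (circOpTwo (cycleGraph 3) 0 2 0 1 0 ≃g K4subTwice) :=
  ⟨mkIso (finSumFinEquiv.trans ((prm ![2,4,5,0,1,3] ![3,4,0,5,1,2] (by decide) (by decide)).trans cIdx)) (by decide)⟩
theorem ot_02011 : Nonempty (circOpTwo (cycleGraph 3) 0 2 0 1 1 ≃g K4subAdj) :=
  ⟨mkIso (finSumFinEquiv.trans ((prm ![4,2,5,0,1,3] ![3,4,1,5,0,2] (by decide) (by decide)).trans cIdx)) (by decide)⟩
theorem ot_02012 : Nonempty (circOpTwo (cycleGraph 3) 0 2 0 1 2 ≃g K4subAdj) :=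
  ⟨mkIso (finSumFinEquiv.trans ((prm ![4,5,2,1,0,3] ![4,3,2,5,0,1] (by decide) (by decide)).trans cIdx)) (by decide)⟩
theorem ot_02100 : Nonempty (circOpTwo (cycleGraph 3) 0 2 1 0 0 ≃g K4subTwice) :=
  ⟨mkIso (finSumFinEquiv.trans ((prm ![2,4,5,0,1,3] ![3,4,0,5,1,2] (by decide) (by decide)).trans cIdx)) (by decide)⟩
theorem ot_02101 : Nonempty (circOpTwo (cycleGraph 3) 0 2 1 0 1 ≃g K4subAdj) :=
  ⟨mkIso (finSumFinEquiv.trans ((prm ![4,2,5,0,1,3] ![3,4,1,5,0,2] (by decide) (by decide)).trans cIdx)) (by decide)⟩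
theorem ot_02102 : Nonempty (circOpTwo (cycleGraph 3) 0 2 1 0 2 ≃g K4subAdj) :=
  ⟨mkIso (finSumFinEquiv.trans ((prm ![4,5,2,1,0,3] ![4,3,2,5,0,1] (by decide) (by decide)).trans cIdx)) (by decide)⟩
theorem ot_02120 : Nonempty (circOpTwo (cycleGraph 3) 0 2 1 2 0 ≃g K4subAdj) :=
  ⟨mkIso (finSumFinEquiv.trans ((prm ![1,4,5,2,0,3] ![4,0,3,5,1,2] (by decide) (by decide)).trans cIdx)) (by decide)⟩
theorem ot_02121 : Nonempty (circOpTwo (cycleGraph 3) 0 2 1 2 1 ≃g K4subAdj) :=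
  ⟨mkIso (finSumFinEquiv.trans ((prm ![4,1,5,0,2,3] ![3,1,4,5,0,2] (by decide) (by decide)).trans cIdx)) (by decide)⟩
theorem ot_02122 : Nonempty (circOpTwo (cycleGraph 3) 0 2 1 2 2 ≃g K4subTwice) :=
  ⟨mkIso (finSumFinEquiv.trans ((prm ![4,5,2,1,0,3] ![4,3,2,5,0,1] (by decide) (by decide)).trans cIdx)) (by decide)⟩
theorem ot_02210 : Nonempty (circOpTwo (cycleGraph 3) 0 2 2 1 0 ≃g K4subAdj) :=
  ⟨mkIso (finSumFinEquiv.trans ((prm ![1,4,5,2,0,3] ![4,0,3,5,1,2] (by decide) (by decide)).trans cIdx)) (by decide)⟩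
theorem ot_02211 : Nonempty (circOpTwo (cycleGraph 3) 0 2 2 1 1 ≃g K4subAdj) :=
  ⟨mkIso (finSumFinEquiv.trans ((prm ![4,1,5,0,2,3] ![3,1,4,5,0,2] (by decide) (by decide)).trans cIdx)) (by decide)⟩
theorem ot_02212 : Nonempty (circOpTwo (cycleGraph 3) 0 2 2 1 2 ≃g K4subTwice) :=
  ⟨mkIso (finSumFinEquiv.trans ((prm ![4,5,2,1,0,3] ![4,3,2,5,0,1] (by decide) (by decide)).trans cIdx)) (by decide)⟩
theorem ot_10020 : Nonempty (circOpTwo (cycleGraph 3) 1 0 0 2 0 ≃g K4subTwice) :=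
  ⟨mkIso (finSumFinEquiv.trans ((prm ![2,4,5,1,0,3] ![4,3,0,5,1,2] (by decide) (by decide)).trans cIdx)) (by decide)⟩
theorem ot_10021 : Nonempty (circOpTwo (cycleGraph 3) 1 0 0 2 1 ≃g K4subAdj) :=
  ⟨mkIso (finSumFinEquiv.trans ((prm ![4,2,5,1,0,3] ![4,3,1,5,0,2] (by decide) (by decide)).trans cIdx)) (by decide)⟩
theorem ot_10022 : Nonempty (circOpTwo (cycleGraph 3) 1 0 0 2 2 ≃g K4subAdj) :=
  ⟨mkIso (finSumFinEquiv.trans ((prm ![4,5,2,0,1,3] ![3,4,2,5,0,1] (by decide) (by decide)).trans cIdx)) (by decide)⟩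
theorem ot_10120 : Nonempty (circOpTwo (cycleGraph 3) 1 0 1 2 0 ≃g K4subAdj) :=
  ⟨mkIso (finSumFinEquiv.trans ((prm ![1,5,4,2,0,3] ![4,0,3,5,2,1] (by decide) (by decide)).trans cIdx)) (by decide)⟩
theorem ot_10121 : Nonempty (circOpTwo (cycleGraph 3) 1 0 1 2 1 ≃g K4subTwice) :=
  ⟨mkIso (finSumFinEquiv.trans ((prm ![4,2,5,1,0,3] ![4,3,1,5,0,2] (by decide) (by decide)).trans cIdx)) (by decide)⟩
theorem ot_10122 : Nonempty (circOpTwo (cycleGraph 3) 1 0 1 2 2 ≃g K4subAdj) :=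
  ⟨mkIso (finSumFinEquiv.trans ((prm ![4,5,1,0,2,3] ![3,2,4,5,0,1] (by decide) (by decide)).trans cIdx)) (by decide)⟩
theorem ot_10200 : Nonempty (circOpTwo (cycleGraph 3) 1 0 2 0 0 ≃g K4subTwice) :=
  ⟨mkIso (finSumFinEquiv.trans ((prm ![2,4,5,1,0,3] ![4,3,0,5,1,2] (by decide) (by decide)).trans cIdx)) (by decide)⟩
theorem ot_10201 : Nonempty (circOpTwo (cycleGraph 3) 1 0 2 0 1 ≃g K4subAdj) :=
  ⟨mkIso (finSumFinEquiv.trans ((prm ![4,2,5,1,0,3] ![4,3,1,5,0,2] (by decide) (by decide)).trans cIdx)) (by decide)⟩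
theorem ot_10202 : Nonempty (circOpTwo (cycleGraph 3) 1 0 2 0 2 ≃g K4subAdj) :=
  ⟨mkIso (finSumFinEquiv.trans ((prm ![4,5,2,0,1,3] ![3,4,2,5,0,1] (by decide) (by decide)).trans cIdx)) (by decide)⟩
theorem ot_10210 : Nonempty (circOpTwo (cycleGraph 3) 1 0 2 1 0 ≃g K4subAdj) :=
  ⟨mkIso (finSumFinEquiv.trans ((prm ![1,5,4,2,0,3] ![4,0,3,5,2,1] (by decide) (by decide)).trans cIdx)) (by decide)⟩
theorem ot_10211 : Nonempty (circOpTwo (cycleGraph 3) 1 0 2 1 1 ≃g K4subTwice) :=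
  ⟨mkIso (finSumFinEquiv.trans ((prm ![4,2,5,1,0,3] ![4,3,1,5,0,2] (by decide) (by decide)).trans cIdx)) (by decide)⟩
theorem ot_10212 : Nonempty (circOpTwo (cycleGraph 3) 1 0 2 1 2 ≃g K4subAdj) :=
  ⟨mkIso (finSumFinEquiv.trans ((prm ![4,5,1,0,2,3] ![3,2,4,5,0,1] (by decide) (by decide)).trans cIdx)) (by decide)⟩
theorem ot_12010 : Nonempty (circOpTwo (cycleGraph 3) 1 2 0 1 0 ≃g K4subAdj) :=
  ⟨mkIso (finSumFinEquiv.trans ((prm ![1,5,4,0,2,3] ![3,0,4,5,2,1] (by decide) (by decide)).trans cIdx)) (by decide)⟩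
theorem ot_12011 : Nonempty (circOpTwo (cycleGraph 3) 1 2 0 1 1 ≃g K4subTwice) :=
  ⟨mkIso (finSumFinEquiv.trans ((prm ![4,2,5,0,1,3] ![3,4,1,5,0,2] (by decide) (by decide)).trans cIdx)) (by decide)⟩
theorem ot_12012 : Nonempty (circOpTwo (cycleGraph 3) 1 2 0 1 2 ≃g K4subAdj) :=
  ⟨mkIso (finSumFinEquiv.trans ((prm ![4,5,1,2,0,3] ![4,2,3,5,0,1] (by decide) (by decide)).trans cIdx)) (by decide)⟩
theorem ot_12020 : Nonempty (circOpTwo (cycleGraph 3) 1 2 0 2 0 ≃g K4subAdj) :=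
  ⟨mkIso (finSumFinEquiv.trans ((prm ![1,4,5,0,2,3] ![3,0,4,5,1,2] (by decide) (by decide)).trans cIdx)) (by decide)⟩
theorem ot_12021 : Nonempty (circOpTwo (cycleGraph 3) 1 2 0 2 1 ≃g K4subAdj) :=
  ⟨mkIso (finSumFinEquiv.trans ((prm ![4,1,5,2,0,3] ![4,1,3,5,0,2] (by decide) (by decide)).trans cIdx)) (by decide)⟩
theorem ot_12022 : Nonempty (circOpTwo (cycleGraph 3) 1 2 0 2 2 ≃g K4subTwice) :=
  ⟨mkIso (finSumFinEquiv.trans ((prm ![4,5,2,0,1,3] ![3,4,2,5,0,1] (by decide) (by decide)).trans cIdx)) (by decide)⟩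
theorem ot_12100 : Nonempty (circOpTwo (cycleGraph 3) 1 2 1 0 0 ≃g K4subAdj) :=
  ⟨mkIso (finSumFinEquiv.trans ((prm ![1,5,4,0,2,3] ![3,0,4,5,2,1] (by decide) (by decide)).trans cIdx)) (by decide)⟩
theorem ot_12101 : Nonempty (circOpTwo (cycleGraph 3) 1 2 1 0 1 ≃g K4subTwice) :=
  ⟨mkIso (finSumFinEquiv.trans ((prm ![4,2,5,0,1,3] ![3,4,1,5,0,2] (by decide) (by decide)).trans cIdx)) (by decide)⟩
theorem ot_12102 : Nonempty (circOpTwo (cycleGraph 3) 1 2 1 0 2 ≃g K4subAdj) :=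
  ⟨mkIso (finSumFinEquiv.trans ((prm ![4,5,1,2,0,3] ![4,2,3,5,0,1] (by decide) (by decide)).trans cIdx)) (by decide)⟩
theorem ot_12200 : Nonempty (circOpTwo (cycleGraph 3) 1 2 2 0 0 ≃g K4subAdj) :=
  ⟨mkIso (finSumFinEquiv.trans ((prm ![1,4,5,0,2,3] ![3,0,4,5,1,2] (by decide) (by decide)).trans cIdx)) (by decide)⟩
theorem ot_12201 : Nonempty (circOpTwo (cycleGraph 3) 1 2 2 0 1 ≃g K4subAdj) :=
  ⟨mkIso (finSumFinEquiv.trans ((prm ![4,1,5,2,0,3] ![4,1,3,5,0,2] (by decide) (by decide)).trans cIdx)) (by decide)⟩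
theorem ot_12202 : Nonempty (circOpTwo (cycleGraph 3) 1 2 2 0 2 ≃g K4subTwice) :=
  ⟨mkIso (finSumFinEquiv.trans ((prm ![4,5,2,0,1,3] ![3,4,2,5,0,1] (by decide) (by decide)).trans cIdx)) (by decide)⟩
theorem ot_20010 : Nonempty (circOpTwo (cycleGraph 3) 2 0 0 1 0 ≃g K4subTwice) :=
  ⟨mkIso (finSumFinEquiv.trans ((prm ![2,4,5,0,1,3] ![3,4,0,5,1,2] (by decide) (by decide)).trans cIdx)) (by decide)⟩
theorem ot_20011 : Nonempty (circOpTwo (cycleGraph 3) 2 0 0 1 1 ≃g K4subAdj) :=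
  ⟨mkIso (finSumFinEquiv.trans ((prm ![4,2,5,0,1,3] ![3,4,1,5,0,2] (by decide) (by decide)).trans cIdx)) (by decide)⟩
theorem ot_20012 : Nonempty (circOpTwo (cycleGraph 3) 2 0 0 1 2 ≃g K4subAdj) :=
  ⟨mkIso (finSumFinEquiv.trans ((prm ![4,5,2,1,0,3] ![4,3,2,5,0,1] (by decide) (by decide)).trans cIdx)) (by decide)⟩
theorem ot_20100 : Nonempty (circOpTwo (cycleGraph 3) 2 0 1 0 0 ≃g K4subTwice) :=
  ⟨mkIso (finSumFinEquiv.trans ((prm ![2,4,5,0,1,3] ![3,4,0,5,1,2] (by decide) (by decide)).trans cIdx)) (by decide)⟩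
theorem ot_20101 : Nonempty (circOpTwo (cycleGraph 3) 2 0 1 0 1 ≃g K4subAdj) :=
  ⟨mkIso (finSumFinEquiv.trans ((prm ![4,2,5,0,1,3] ![3,4,1,5,0,2] (by decide) (by decide)).trans cIdx)) (by decide)⟩
theorem ot_20102 : Nonempty (circOpTwo (cycleGraph 3) 2 0 1 0 2 ≃g K4subAdj) :=
  ⟨mkIso (finSumFinEquiv.trans ((prm ![4,5,2,1,0,3] ![4,3,2,5,0,1] (by decide) (by decide)).trans cIdx)) (by decide)⟩
theorem ot_20120 : Nonempty (circOpTwo (cycleGraph 3) 2 0 1 2 0 ≃g K4subAdj) :=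
  ⟨mkIso (finSumFinEquiv.trans ((prm ![1,4,5,2,0,3] ![4,0,3,5,1,2] (by decide) (by decide)).trans cIdx)) (by decide)⟩
theorem ot_20121 : Nonempty (circOpTwo (cycleGraph 3) 2 0 1 2 1 ≃g K4subAdj) :=
  ⟨mkIso (finSumFinEquiv.trans ((prm ![4,1,5,0,2,3] ![3,1,4,5,0,2] (by decide) (by decide)).trans cIdx)) (by decide)⟩
theorem ot_20122 : Nonempty (circOpTwo (cycleGraph 3) 2 0 1 2 2 ≃g K4subTwice) :=
  ⟨mkIso (finSumFinEquiv.trans ((prm ![4,5,2,1,0,3] ![4,3,2,5,0,1] (by decide) (by decide)).trans cIdx)) (by decide)⟩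
theorem ot_20210 : Nonempty (circOpTwo (cycleGraph 3) 2 0 2 1 0 ≃g K4subAdj) :=
  ⟨mkIso (finSumFinEquiv.trans ((prm ![1,4,5,2,0,3] ![4,0,3,5,1,2] (by decide) (by decide)).trans cIdx)) (by decide)⟩
theorem ot_20211 : Nonempty (circOpTwo (cycleGraph 3) 2 0 2 1 1 ≃g K4subAdj) :=
  ⟨mkIso (finSumFinEquiv.trans ((prm ![4,1,5,0,2,3] ![3,1,4,5,0,2] (by decide) (by decide)).trans cIdx)) (by decide)⟩
theorem ot_20212 : Nonempty (circOpTwo (cycleGraph 3) 2 0 2 1 2 ≃g K4subTwice) :=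
  ⟨mkIso (finSumFinEquiv.trans ((prm ![4,5,2,1,0,3] ![4,3,2,5,0,1] (by decide) (by decide)).trans cIdx)) (by decide)⟩
theorem ot_21010 : Nonempty (circOpTwo (cycleGraph 3) 2 1 0 1 0 ≃g K4subAdj) :=
  ⟨mkIso (finSumFinEquiv.trans ((prm ![1,5,4,0,2,3] ![3,0,4,5,2,1] (by decide) (by decide)).trans cIdx)) (by decide)⟩
theorem ot_21011 : Nonempty (circOpTwo (cycleGraph 3) 2 1 0 1 1 ≃g K4subTwice) :=
  ⟨mkIso (finSumFinEquiv.trans ((prm ![4,2,5,0,1,3] ![3,4,1,5,0,2] (by decide) (by decide)).trans cIdx)) (by decide)⟩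
theorem ot_21012 : Nonempty (circOpTwo (cycleGraph 3) 2 1 0 1 2 ≃g K4subAdj) :=
  ⟨mkIso (finSumFinEquiv.trans ((prm ![4,5,1,2,0,3] ![4,2,3,5,0,1] (by decide) (by decide)).trans cIdx)) (by decide)⟩
theorem ot_21020 : Nonempty (circOpTwo (cycleGraph 3) 2 1 0 2 0 ≃g K4subAdj) :=
  ⟨mkIso (finSumFinEquiv.trans ((prm ![1,4,5,0,2,3] ![3,0,4,5,1,2] (by decide) (by decide)).trans cIdx)) (by decide)⟩
theorem ot_21021 : Nonempty (circOpTwo (cycleGraph 3) 2 1 0 2 1 ≃g K4subAdj) :=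
  ⟨mkIso (finSumFinEquiv.trans ((prm ![4,1,5,2,0,3] ![4,1,3,5,0,2] (by decide) (by decide)).trans cIdx)) (by decide)⟩
theorem ot_21022 : Nonempty (circOpTwo (cycleGraph 3) 2 1 0 2 2 ≃g K4subTwice) :=
  ⟨mkIso (finSumFinEquiv.trans ((prm ![4,5,2,0,1,3] ![3,4,2,5,0,1] (by decide) (by decide)).trans cIdx)) (by decide)⟩
theorem ot_21100 : Nonempty (circOpTwo (cycleGraph 3) 2 1 1 0 0 ≃g K4subAdj) :=
  ⟨mkIso (finSumFinEquiv.trans ((prm ![1,5,4,0,2,3] ![3,0,4,5,2,1] (by decide) (by decide)).trans cIdx)) (by decide)⟩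
theorem ot_21101 : Nonempty (circOpTwo (cycleGraph 3) 2 1 1 0 1 ≃g K4subTwice) :=
  ⟨mkIso (finSumFinEquiv.trans ((prm ![4,2,5,0,1,3] ![3,4,1,5,0,2] (by decide) (by decide)).trans cIdx)) (by decide)⟩
theorem ot_21102 : Nonempty (circOpTwo (cycleGraph 3) 2 1 1 0 2 ≃g K4subAdj) :=
  ⟨mkIso (finSumFinEquiv.trans ((prm ![4,5,1,2,0,3] ![4,2,3,5,0,1] (by decide) (by decide)).trans cIdx)) (by decide)⟩
theorem ot_21200 : Nonempty (circOpTwo (cycleGraph 3) 2 1 2 0 0 ≃g K4subAdj) :=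
  ⟨mkIso (finSumFinEquiv.trans ((prm ![1,4,5,0,2,3] ![3,0,4,5,1,2] (by decide) (by decide)).trans cIdx)) (by decide)⟩
theorem ot_21201 : Nonempty (circOpTwo (cycleGraph 3) 2 1 2 0 1 ≃g K4subAdj) :=
  ⟨mkIso (finSumFinEquiv.trans ((prm ![4,1,5,2,0,3] ![4,1,3,5,0,2] (by decide) (by decide)).trans cIdx)) (by decide)⟩
theorem ot_21202 : Nonempty (circOpTwo (cycleGraph 3) 2 1 2 0 2 ≃g K4subTwice) :=
  ⟨mkIso (finSumFinEquiv.trans ((prm ![4,5,2,0,1,3] ![3,4,2,5,0,1] (by decide) (by decide)).trans cIdx)) (by decide)⟩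
theorem oo_010 : Nonempty (circOpOne (cycleGraph 3) 0 1 0 ≃g K4subTwice) :=
  ⟨mkIso (finSumFinEquiv.trans ((prm ![0,4,5,2,1,3] ![0,4,3,5,1,2] (by decide) (by decide)).trans cIdx)) (by decide)⟩
theorem oo_011 : Nonempty (circOpOne (cycleGraph 3) 0 1 1 ≃g K4subTwice) :=
  ⟨mkIso (finSumFinEquiv.trans ((prm ![4,0,5,1,2,3] ![1,3,4,5,0,2] (by decide) (by decide)).trans cIdx)) (by decide)⟩
theorem oo_012 : Nonempty (circOpOne (cycleGraph 3) 0 1 2 ≃g K4subAdj) :=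
  ⟨mkIso (finSumFinEquiv.trans ((prm ![4,5,0,1,2,3] ![2,3,4,5,0,1] (by decide) (by decide)).trans cIdx)) (by decide)⟩
theorem oo_020 : Nonempty (circOpOne (cycleGraph 3) 0 2 0 ≃g K4subTwice) :=
  ⟨mkIso (finSumFinEquiv.trans ((prm ![0,5,4,2,1,3] ![0,4,3,5,2,1] (by decide) (by decide)).trans cIdx)) (by decide)⟩
theorem oo_021 : Nonempty (circOpOne (cycleGraph 3) 0 2 1 ≃g K4subAdj) :=
  ⟨mkIso (finSumFinEquiv.trans ((prm ![4,0,5,1,2,3] ![1,3,4,5,0,2] (by decide) (by decide)).trans cIdx)) (by decide)⟩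
theorem oo_022 : Nonempty (circOpOne (cycleGraph 3) 0 2 2 ≃g K4subTwice) :=
  ⟨mkIso (finSumFinEquiv.trans ((prm ![4,5,0,1,2,3] ![2,3,4,5,0,1] (by decide) (by decide)).trans cIdx)) (by decide)⟩
theorem oo_100 : Nonempty (circOpOne (cycleGraph 3) 1 0 0 ≃g K4subTwice) :=
  ⟨mkIso (finSumFinEquiv.trans ((prm ![0,4,5,1,2,3] ![0,3,4,5,1,2] (by decide) (by decide)).trans cIdx)) (by decide)⟩
theorem oo_101 : Nonempty (circOpOne (cycleGraph 3) 1 0 1 ≃g K4subTwice) :=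
  ⟨mkIso (finSumFinEquiv.trans ((prm ![4,0,5,2,1,3] ![1,4,3,5,0,2] (by decide) (by decide)).trans cIdx)) (by decide)⟩
theorem oo_102 : Nonempty (circOpOne (cycleGraph 3) 1 0 2 ≃g K4subAdj) :=
  ⟨mkIso (finSumFinEquiv.trans ((prm ![4,5,0,2,1,3] ![2,4,3,5,0,1] (by decide) (by decide)).trans cIdx)) (by decide)⟩
theorem oo_120 : Nonempty (circOpOne (cycleGraph 3) 1 2 0 ≃g K4subAdj) :=
  ⟨mkIso (finSumFinEquiv.trans ((prm ![0,4,5,1,2,3] ![0,3,4,5,1,2] (by decide) (by decide)).trans cIdx)) (by decide)⟩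
theorem oo_121 : Nonempty (circOpOne (cycleGraph 3) 1 2 1 ≃g K4subTwice) :=
  ⟨mkIso (finSumFinEquiv.trans ((prm ![4,1,5,2,0,3] ![4,1,3,5,0,2] (by decide) (by decide)).trans cIdx)) (by decide)⟩
theorem oo_122 : Nonempty (circOpOne (cycleGraph 3) 1 2 2 ≃g K4subTwice) :=
  ⟨mkIso (finSumFinEquiv.trans ((prm ![4,5,1,0,2,3] ![3,2,4,5,0,1] (by decide) (by decide)).trans cIdx)) (by decide)⟩
theorem oo_200 : Nonempty (circOpOne (cycleGraph 3) 2 0 0 ≃g K4subTwice) :=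
  ⟨mkIso (finSumFinEquiv.trans ((prm ![0,5,4,1,2,3] ![0,3,4,5,2,1] (by decide) (by decide)).trans cIdx)) (by decide)⟩
theorem oo_201 : Nonempty (circOpOne (cycleGraph 3) 2 0 1 ≃g K4subAdj) :=
  ⟨mkIso (finSumFinEquiv.trans ((prm ![4,0,5,2,1,3] ![1,4,3,5,0,2] (by decide) (by decide)).trans cIdx)) (by decide)⟩
theorem oo_202 : Nonempty (circOpOne (cycleGraph 3) 2 0 2 ≃g K4subTwice) :=
  ⟨mkIso (finSumFinEquiv.trans ((prm ![4,5,0,2,1,3] ![2,4,3,5,0,1] (by decide) (by decide)).trans cIdx)) (by decide)⟩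
theorem oo_210 : Nonempty (circOpOne (cycleGraph 3) 2 1 0 ≃g K4subAdj) :=
  ⟨mkIso (finSumFinEquiv.trans ((prm ![0,4,5,2,1,3] ![0,4,3,5,1,2] (by decide) (by decide)).trans cIdx)) (by decide)⟩
theorem oo_211 : Nonempty (circOpOne (cycleGraph 3) 2 1 1 ≃g K4subTwice) :=
  ⟨mkIso (finSumFinEquiv.trans ((prm ![4,1,5,0,2,3] ![3,1,4,5,0,2] (by decide) (by decide)).trans cIdx)) (by decide)⟩
theorem oo_212 : Nonempty (circOpOne (cycleGraph 3) 2 1 2 ≃g K4subTwice) :=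
  ⟨mkIso (finSumFinEquiv.trans ((prm ![4,5,1,2,0,3] ![4,2,3,5,0,1] (by decide) (by decide)).trans cIdx)) (by decide)⟩
theorem sd_02 : Nonempty (subdivideEdge K4plus (some 0) (some 2) ≃g K4subAdj) :=
  ⟨mkIso (cIdx.symm.trans ((prm ![0,1,2,3,4,5] ![0,1,2,3,4,5] (by decide) (by decide)).trans cIdx)) (by decide)⟩
theorem sd_03 : Nonempty (subdivideEdge K4plus (some 0) (some 3) ≃g K4subAdj) :=
  ⟨mkIso (cIdx.symm.trans ((prm ![0,1,3,2,4,5] ![0,1,3,2,4,5] (by decide) (by decide)).trans cIdx)) (by decide)⟩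
theorem sd_0n : Nonempty (subdivideEdge K4plus (some 0) none ≃g K4subTwice) :=
  ⟨mkIso (cIdx.symm.trans ((prm ![0,1,2,3,4,5] ![0,1,2,3,4,5] (by decide) (by decide)).trans cIdx)) (by decide)⟩
theorem sd_12 : Nonempty (subdivideEdge K4plus (some 1) (some 2) ≃g K4subAdj) :=
  ⟨mkIso (cIdx.symm.trans ((prm ![1,0,2,3,4,5] ![1,0,2,3,4,5] (by decide) (by decide)).trans cIdx)) (by decide)⟩
theorem sd_13 : Nonempty (subdivideEdge K4plus (some 1) (some 3) ≃g K4subAdj) :=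
  ⟨mkIso (cIdx.symm.trans ((prm ![1,0,3,2,4,5] ![1,0,3,2,4,5] (by decide) (by decide)).trans cIdx)) (by decide)⟩
theorem sd_1n : Nonempty (subdivideEdge K4plus (some 1) none ≃g K4subTwice) :=
  ⟨mkIso (cIdx.symm.trans ((prm ![0,1,2,3,5,4] ![0,1,2,3,5,4] (by decide) (by decide)).trans cIdx)) (by decide)⟩
theorem sd_20 : Nonempty (subdivideEdge K4plus (some 2) (some 0) ≃g K4subAdj) :=
  ⟨mkIso (cIdx.symm.trans ((prm ![0,1,2,3,4,5] ![0,1,2,3,4,5] (by decide) (by decide)).trans cIdx)) (by decide)⟩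
theorem sd_21 : Nonempty (subdivideEdge K4plus (some 2) (some 1) ≃g K4subAdj) :=
  ⟨mkIso (cIdx.symm.trans ((prm ![1,0,2,3,4,5] ![1,0,2,3,4,5] (by decide) (by decide)).trans cIdx)) (by decide)⟩
theorem sd_23 : Nonempty (subdivideEdge K4plus (some 2) (some 3) ≃g K4subMatching) :=
  ⟨mkIso (cIdx.symm.trans ((prm ![0,1,2,3,4,5] ![0,1,2,3,4,5] (by decide) (by decide)).trans cIdx)) (by decide)⟩
theorem sd_30 : Nonempty (subdivideEdge K4plus (some 3) (some 0) ≃g K4subAdj) :=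
  ⟨mkIso (cIdx.symm.trans ((prm ![0,1,3,2,4,5] ![0,1,3,2,4,5] (by decide) (by decide)).trans cIdx)) (by decide)⟩
theorem sd_31 : Nonempty (subdivideEdge K4plus (some 3) (some 1) ≃g K4subAdj) :=
  ⟨mkIso (cIdx.symm.trans ((prm ![1,0,3,2,4,5] ![1,0,3,2,4,5] (by decide) (by decide)).trans cIdx)) (by decide)⟩
theorem sd_32 : Nonempty (subdivideEdge K4plus (some 3) (some 2) ≃g K4subMatching) :=
  ⟨mkIso (cIdx.symm.trans ((prm ![0,1,2,3,4,5] ![0,1,2,3,4,5] (by decide) (by decide)).trans cIdx)) (by decide)⟩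
theorem sd_n0 : Nonempty (subdivideEdge K4plus none (some 0) ≃g K4subTwice) :=
  ⟨mkIso (cIdx.symm.trans ((prm ![0,1,2,3,4,5] ![0,1,2,3,4,5] (by decide) (by decide)).trans cIdx)) (by decide)⟩
theorem sd_n1 : Nonempty (subdivideEdge K4plus none (some 1) ≃g K4subTwice) :=
  ⟨mkIso (cIdx.symm.trans ((prm ![0,1,2,3,5,4] ![0,1,2,3,5,4] (by decide) (by decide)).trans cIdx)) (by decide)⟩

theorem opTwoCases (u1 v1 u2 v2 a : Fin 3) (h1 : (cycleGraph 3).Adj u1 v1)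
    (h2 : (cycleGraph 3).Adj u2 v2) (h3 : s(u1, v1) ≠ s(u2, v2)) :
    Nonempty (circOpTwo (cycleGraph 3) u1 v1 u2 v2 a ≃g K4subTwice) ∨
    Nonempty (circOpTwo (cycleGraph 3) u1 v1 u2 v2 a ≃g K4subAdj) ∨
    Nonempty (circOpTwo (cycleGraph 3) u1 v1 u2 v2 a ≃g K4subMatching) :=
  match u1, v1, u2, v2, a, h1, h2, h3 with
  | 0, 0, 0, 0, 0, h1, h2, h3 => absurd h1 (by decide)
  | 0, 0, 0, 0, 1, h1, h2, h3 => absurd h1 (by decide)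
  | 0, 0, 0, 0, 2, h1, h2, h3 => absurd h1 (by decide)
  | 0, 0, 0, 1, 0, h1, h2, h3 => absurd h1 (by decide)
  | 0, 0, 0, 1, 1, h1, h2, h3 => absurd h1 (by decide)
  | 0, 0, 0, 1, 2, h1, h2, h3 => absurd h1 (by decide)
  | 0, 0, 0, 2, 0, h1, h2, h3 => absurd h1 (by decide)
  | 0, 0, 0, 2, 1, h1, h2, h3 => absurd h1 (by decide)
  | 0, 0, 0, 2, 2, h1, h2, h3 => absurd h1 (by decide)
  | 0, 0, 1, 0, 0, h1, h2, h3 => absurd h1 (by decide)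
  | 0, 0, 1, 0, 1, h1, h2, h3 => absurd h1 (by decide)
  | 0, 0, 1, 0, 2, h1, h2, h3 => absurd h1 (by decide)
  | 0, 0, 1, 1, 0, h1, h2, h3 => absurd h1 (by decide)
  | 0, 0, 1, 1, 1, h1, h2, h3 => absurd h1 (by decide)
  | 0, 0, 1, 1, 2, h1, h2, h3 => absurd h1 (by decide)
  | 0, 0, 1, 2, 0, h1, h2, h3 => absurd h1 (by decide)
  | 0, 0, 1, 2, 1, h1, h2, h3 => absurd h1 (by decide)
  | 0, 0, 1, 2, 2, h1, h2, h3 => absurd h1 (by decide)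
  | 0, 0, 2, 0, 0, h1, h2, h3 => absurd h1 (by decide)
  | 0, 0, 2, 0, 1, h1, h2, h3 => absurd h1 (by decide)
  | 0, 0, 2, 0, 2, h1, h2, h3 => absurd h1 (by decide)
  | 0, 0, 2, 1, 0, h1, h2, h3 => absurd h1 (by decide)
  | 0, 0, 2, 1, 1, h1, h2, h3 => absurd h1 (by decide)
  | 0, 0, 2, 1, 2, h1, h2, h3 => absurd h1 (by decide)
  | 0, 0, 2, 2, 0, h1, h2, h3 => absurd h1 (by decide)
  | 0, 0, 2, 2, 1, h1, h2, h3 => absurd h1 (by decide)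
  | 0, 0, 2, 2, 2, h1, h2, h3 => absurd h1 (by decide)
  | 0, 1, 0, 0, 0, h1, h2, h3 => absurd h2 (by decide)
  | 0, 1, 0, 0, 1, h1, h2, h3 => absurd h2 (by decide)
  | 0, 1, 0, 0, 2, h1, h2, h3 => absurd h2 (by decide)
  | 0, 1, 0, 1, 0, h1, h2, h3 => absurd (by decide) h3
  | 0, 1, 0, 1, 1, h1, h2, h3 => absurd (by decide) h3
  | 0, 1, 0, 1, 2, h1, h2, h3 => absurd (by decide) h3
  | 0, 1, 0, 2, 0, h1, h2, h3 => Or.inl ⟨(ot_01020).some⟩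
  | 0, 1, 0, 2, 1, h1, h2, h3 => Or.inr (Or.inl ⟨(ot_01021).some⟩)
  | 0, 1, 0, 2, 2, h1, h2, h3 => Or.inr (Or.inl ⟨(ot_01022).some⟩)
  | 0, 1, 1, 0, 0, h1, h2, h3 => absurd (by decide) h3
  | 0, 1, 1, 0, 1, h1, h2, h3 => absurd (by decide) h3
  | 0, 1, 1, 0, 2, h1, h2, h3 => absurd (by decide) h3
  | 0, 1, 1, 1, 0, h1, h2, h3 => absurd h2 (by decide)
  | 0, 1, 1, 1, 1, h1, h2, h3 => absurd h2 (by decide)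
  | 0, 1, 1, 1, 2, h1, h2, h3 => absurd h2 (by decide)
  | 0, 1, 1, 2, 0, h1, h2, h3 => Or.inr (Or.inl ⟨(ot_01120).some⟩)
  | 0, 1, 1, 2, 1, h1, h2, h3 => Or.inl ⟨(ot_01121).some⟩
  | 0, 1, 1, 2, 2, h1, h2, h3 => Or.inr (Or.inl ⟨(ot_01122).some⟩)
  | 0, 1, 2, 0, 0, h1, h2, h3 => Or.inl ⟨(ot_01200).some⟩
  | 0, 1, 2, 0, 1, h1, h2, h3 => Or.inr (Or.inl ⟨(ot_01201).some⟩)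
  | 0, 1, 2, 0, 2, h1, h2, h3 => Or.inr (Or.inl ⟨(ot_01202).some⟩)
  | 0, 1, 2, 1, 0, h1, h2, h3 => Or.inr (Or.inl ⟨(ot_01210).some⟩)
  | 0, 1, 2, 1, 1, h1, h2, h3 => Or.inl ⟨(ot_01211).some⟩
  | 0, 1, 2, 1, 2, h1, h2, h3 => Or.inr (Or.inl ⟨(ot_01212).some⟩)
  | 0, 1, 2, 2, 0, h1, h2, h3 => absurd h2 (by decide)
  | 0, 1, 2, 2, 1, h1, h2, h3 => absurd h2 (by decide)
  | 0, 1, 2, 2, 2, h1, h2, h3 => absurd h2 (by decide)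
  | 0, 2, 0, 0, 0, h1, h2, h3 => absurd h2 (by decide)
  | 0, 2, 0, 0, 1, h1, h2, h3 => absurd h2 (by decide)
  | 0, 2, 0, 0, 2, h1, h2, h3 => absurd h2 (by decide)
  | 0, 2, 0, 1, 0, h1, h2, h3 => Or.inl ⟨(ot_02010).some⟩
  | 0, 2, 0, 1, 1, h1, h2, h3 => Or.inr (Or.inl ⟨(ot_02011).some⟩)
  | 0, 2, 0, 1, 2, h1, h2, h3 => Or.inr (Or.inl ⟨(ot_02012).some⟩)
  | 0, 2, 0, 2, 0, h1, h2, h3 => absurd (by decide) h3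
  | 0, 2, 0, 2, 1, h1, h2, h3 => absurd (by decide) h3
  | 0, 2, 0, 2, 2, h1, h2, h3 => absurd (by decide) h3
  | 0, 2, 1, 0, 0, h1, h2, h3 => Or.inl ⟨(ot_02100).some⟩
  | 0, 2, 1, 0, 1, h1, h2, h3 => Or.inr (Or.inl ⟨(ot_02101).some⟩)
  | 0, 2, 1, 0, 2, h1, h2, h3 => Or.inr (Or.inl ⟨(ot_02102).some⟩)
  | 0, 2, 1, 1, 0, h1, h2, h3 => absurd h2 (by decide)
  | 0, 2, 1, 1, 1, h1, h2, h3 => absurd h2 (by decide)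
  | 0, 2, 1, 1, 2, h1, h2, h3 => absurd h2 (by decide)
  | 0, 2, 1, 2, 0, h1, h2, h3 => Or.inr (Or.inl ⟨(ot_02120).some⟩)
  | 0, 2, 1, 2, 1, h1, h2, h3 => Or.inr (Or.inl ⟨(ot_02121).some⟩)
  | 0, 2, 1, 2, 2, h1, h2, h3 => Or.inl ⟨(ot_02122).some⟩
  | 0, 2, 2, 0, 0, h1, h2, h3 => absurd (by decide) h3
  | 0, 2, 2, 0, 1, h1, h2, h3 => absurd (by decide) h3
  | 0, 2, 2, 0, 2, h1, h2, h3 => absurd (by decide) h3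
  | 0, 2, 2, 1, 0, h1, h2, h3 => Or.inr (Or.inl ⟨(ot_02210).some⟩)
  | 0, 2, 2, 1, 1, h1, h2, h3 => Or.inr (Or.inl ⟨(ot_02211).some⟩)
  | 0, 2, 2, 1, 2, h1, h2, h3 => Or.inl ⟨(ot_02212).some⟩
  | 0, 2, 2, 2, 0, h1, h2, h3 => absurd h2 (by decide)
  | 0, 2, 2, 2, 1, h1, h2, h3 => absurd h2 (by decide)
  | 0, 2, 2, 2, 2, h1, h2, h3 => absurd h2 (by decide)
  | 1, 0, 0, 0, 0, h1, h2, h3 => absurd h2 (by decide)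
  | 1, 0, 0, 0, 1, h1, h2, h3 => absurd h2 (by decide)
  | 1, 0, 0, 0, 2, h1, h2, h3 => absurd h2 (by decide)
  | 1, 0, 0, 1, 0, h1, h2, h3 => absurd (by decide) h3
  | 1, 0, 0, 1, 1, h1, h2, h3 => absurd (by decide) h3
  | 1, 0, 0, 1, 2, h1, h2, h3 => absurd (by decide) h3
  | 1, 0, 0, 2, 0, h1, h2, h3 => Or.inl ⟨(ot_10020).some⟩
  | 1, 0, 0, 2, 1, h1, h2, h3 => Or.inr (Or.inl ⟨(ot_10021).some⟩)
  | 1, 0, 0, 2, 2, h1, h2, h3 => Or.inr (Or.inl ⟨(ot_10022).some⟩)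
  | 1, 0, 1, 0, 0, h1, h2, h3 => absurd (by decide) h3
  | 1, 0, 1, 0, 1, h1, h2, h3 => absurd (by decide) h3
  | 1, 0, 1, 0, 2, h1, h2, h3 => absurd (by decide) h3
  | 1, 0, 1, 1, 0, h1, h2, h3 => absurd h2 (by decide)
  | 1, 0, 1, 1, 1, h1, h2, h3 => absurd h2 (by decide)
  | 1, 0, 1, 1, 2, h1, h2, h3 => absurd h2 (by decide)
  | 1, 0, 1, 2, 0, h1, h2, h3 => Or.inr (Or.inl ⟨(ot_10120).some⟩)
  | 1, 0, 1, 2, 1, h1, h2, h3 => Or.inl ⟨(ot_10121).some⟩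
  | 1, 0, 1, 2, 2, h1, h2, h3 => Or.inr (Or.inl ⟨(ot_10122).some⟩)
  | 1, 0, 2, 0, 0, h1, h2, h3 => Or.inl ⟨(ot_10200).some⟩
  | 1, 0, 2, 0, 1, h1, h2, h3 => Or.inr (Or.inl ⟨(ot_10201).some⟩)
  | 1, 0, 2, 0, 2, h1, h2, h3 => Or.inr (Or.inl ⟨(ot_10202).some⟩)
  | 1, 0, 2, 1, 0, h1, h2, h3 => Or.inr (Or.inl ⟨(ot_10210).some⟩)
  | 1, 0, 2, 1, 1, h1, h2, h3 => Or.inl ⟨(ot_10211).some⟩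
  | 1, 0, 2, 1, 2, h1, h2, h3 => Or.inr (Or.inl ⟨(ot_10212).some⟩)
  | 1, 0, 2, 2, 0, h1, h2, h3 => absurd h2 (by decide)
  | 1, 0, 2, 2, 1, h1, h2, h3 => absurd h2 (by decide)
  | 1, 0, 2, 2, 2, h1, h2, h3 => absurd h2 (by decide)
  | 1, 1, 0, 0, 0, h1, h2, h3 => absurd h1 (by decide)
  | 1, 1, 0, 0, 1, h1, h2, h3 => absurd h1 (by decide)
  | 1, 1, 0, 0, 2, h1, h2, h3 => absurd h1 (by decide)
  | 1, 1, 0, 1, 0, h1, h2, h3 => absurd h1 (by decide)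
  | 1, 1, 0, 1, 1, h1, h2, h3 => absurd h1 (by decide)
  | 1, 1, 0, 1, 2, h1, h2, h3 => absurd h1 (by decide)
  | 1, 1, 0, 2, 0, h1, h2, h3 => absurd h1 (by decide)
  | 1, 1, 0, 2, 1, h1, h2, h3 => absurd h1 (by decide)
  | 1, 1, 0, 2, 2, h1, h2, h3 => absurd h1 (by decide)
  | 1, 1, 1, 0, 0, h1, h2, h3 => absurd h1 (by decide)
  | 1, 1, 1, 0, 1, h1, h2, h3 => absurd h1 (by decide)
  | 1, 1, 1, 0, 2, h1, h2, h3 => absurd h1 (by decide)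
  | 1, 1, 1, 1, 0, h1, h2, h3 => absurd h1 (by decide)
  | 1, 1, 1, 1, 1, h1, h2, h3 => absurd h1 (by decide)
  | 1, 1, 1, 1, 2, h1, h2, h3 => absurd h1 (by decide)
  | 1, 1, 1, 2, 0, h1, h2, h3 => absurd h1 (by decide)
  | 1, 1, 1, 2, 1, h1, h2, h3 => absurd h1 (by decide)
  | 1, 1, 1, 2, 2, h1, h2, h3 => absurd h1 (by decide)
  | 1, 1, 2, 0, 0, h1, h2, h3 => absurd h1 (by decide)
  | 1, 1, 2, 0, 1, h1, h2, h3 => absurd h1 (by decide)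
  | 1, 1, 2, 0, 2, h1, h2, h3 => absurd h1 (by decide)
  | 1, 1, 2, 1, 0, h1, h2, h3 => absurd h1 (by decide)
  | 1, 1, 2, 1, 1, h1, h2, h3 => absurd h1 (by decide)
  | 1, 1, 2, 1, 2, h1, h2, h3 => absurd h1 (by decide)
  | 1, 1, 2, 2, 0, h1, h2, h3 => absurd h1 (by decide)
  | 1, 1, 2, 2, 1, h1, h2, h3 => absurd h1 (by decide)
  | 1, 1, 2, 2, 2, h1, h2, h3 => absurd h1 (by decide)
  | 1, 2, 0, 0, 0, h1, h2, h3 => absurd h2 (by decide)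
  | 1, 2, 0, 0, 1, h1, h2, h3 => absurd h2 (by decide)
  | 1, 2, 0, 0, 2, h1, h2, h3 => absurd h2 (by decide)
  | 1, 2, 0, 1, 0, h1, h2, h3 => Or.inr (Or.inl ⟨(ot_12010).some⟩)
  | 1, 2, 0, 1, 1, h1, h2, h3 => Or.inl ⟨(ot_12011).some⟩
  | 1, 2, 0, 1, 2, h1, h2, h3 => Or.inr (Or.inl ⟨(ot_12012).some⟩)
  | 1, 2, 0, 2, 0, h1, h2, h3 => Or.inr (Or.inl ⟨(ot_12020).some⟩)
  | 1, 2, 0, 2, 1, h1, h2, h3 => Or.inr (Or.inl ⟨(ot_12021).some⟩)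
  | 1, 2, 0, 2, 2, h1, h2, h3 => Or.inl ⟨(ot_12022).some⟩
  | 1, 2, 1, 0, 0, h1, h2, h3 => Or.inr (Or.inl ⟨(ot_12100).some⟩)
  | 1, 2, 1, 0, 1, h1, h2, h3 => Or.inl ⟨(ot_12101).some⟩
  | 1, 2, 1, 0, 2, h1, h2, h3 => Or.inr (Or.inl ⟨(ot_12102).some⟩)
  | 1, 2, 1, 1, 0, h1, h2, h3 => absurd h2 (by decide)
  | 1, 2, 1, 1, 1, h1, h2, h3 => absurd h2 (by decide)
  | 1, 2, 1, 1, 2, h1, h2, h3 => absurd h2 (by decide)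
  | 1, 2, 1, 2, 0, h1, h2, h3 => absurd (by decide) h3
  | 1, 2, 1, 2, 1, h1, h2, h3 => absurd (by decide) h3
  | 1, 2, 1, 2, 2, h1, h2, h3 => absurd (by decide) h3
  | 1, 2, 2, 0, 0, h1, h2, h3 => Or.inr (Or.inl ⟨(ot_12200).some⟩)
  | 1, 2, 2, 0, 1, h1, h2, h3 => Or.inr (Or.inl ⟨(ot_12201).some⟩)
  | 1, 2, 2, 0, 2, h1, h2, h3 => Or.inl ⟨(ot_12202).some⟩
  | 1, 2, 2, 1, 0, h1, h2, h3 => absurd (by decide) h3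
  | 1, 2, 2, 1, 1, h1, h2, h3 => absurd (by decide) h3
  | 1, 2, 2, 1, 2, h1, h2, h3 => absurd (by decide) h3
  | 1, 2, 2, 2, 0, h1, h2, h3 => absurd h2 (by decide)
  | 1, 2, 2, 2, 1, h1, h2, h3 => absurd h2 (by decide)
  | 1, 2, 2, 2, 2, h1, h2, h3 => absurd h2 (by decide)
  | 2, 0, 0, 0, 0, h1, h2, h3 => absurd h2 (by decide)
  | 2, 0, 0, 0, 1, h1, h2, h3 => absurd h2 (by decide)
  | 2, 0, 0, 0, 2, h1, h2, h3 => absurd h2 (by decide)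
  | 2, 0, 0, 1, 0, h1, h2, h3 => Or.inl ⟨(ot_20010).some⟩
  | 2, 0, 0, 1, 1, h1, h2, h3 => Or.inr (Or.inl ⟨(ot_20011).some⟩)
  | 2, 0, 0, 1, 2, h1, h2, h3 => Or.inr (Or.inl ⟨(ot_20012).some⟩)
  | 2, 0, 0, 2, 0, h1, h2, h3 => absurd (by decide) h3
  | 2, 0, 0, 2, 1, h1, h2, h3 => absurd (by decide) h3
  | 2, 0, 0, 2, 2, h1, h2, h3 => absurd (by decide) h3
  | 2, 0, 1, 0, 0, h1, h2, h3 => Or.inl ⟨(ot_20100).some⟩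
  | 2, 0, 1, 0, 1, h1, h2, h3 => Or.inr (Or.inl ⟨(ot_20101).some⟩)
  | 2, 0, 1, 0, 2, h1, h2, h3 => Or.inr (Or.inl ⟨(ot_20102).some⟩)
  | 2, 0, 1, 1, 0, h1, h2, h3 => absurd h2 (by decide)
  | 2, 0, 1, 1, 1, h1, h2, h3 => absurd h2 (by decide)
  | 2, 0, 1, 1, 2, h1, h2, h3 => absurd h2 (by decide)
  | 2, 0, 1, 2, 0, h1, h2, h3 => Or.inr (Or.inl ⟨(ot_20120).some⟩)
  | 2, 0, 1, 2, 1, h1, h2, h3 => Or.inr (Or.inl ⟨(ot_20121).some⟩)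
  | 2, 0, 1, 2, 2, h1, h2, h3 => Or.inl ⟨(ot_20122).some⟩
  | 2, 0, 2, 0, 0, h1, h2, h3 => absurd (by decide) h3
  | 2, 0, 2, 0, 1, h1, h2, h3 => absurd (by decide) h3
  | 2, 0, 2, 0, 2, h1, h2, h3 => absurd (by decide) h3
  | 2, 0, 2, 1, 0, h1, h2, h3 => Or.inr (Or.inl ⟨(ot_20210).some⟩)
  | 2, 0, 2, 1, 1, h1, h2, h3 => Or.inr (Or.inl ⟨(ot_20211).some⟩)
  | 2, 0, 2, 1, 2, h1, h2, h3 => Or.inl ⟨(ot_20212).some⟩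
  | 2, 0, 2, 2, 0, h1, h2, h3 => absurd h2 (by decide)
  | 2, 0, 2, 2, 1, h1, h2, h3 => absurd h2 (by decide)
  | 2, 0, 2, 2, 2, h1, h2, h3 => absurd h2 (by decide)
  | 2, 1, 0, 0, 0, h1, h2, h3 => absurd h2 (by decide)
  | 2, 1, 0, 0, 1, h1, h2, h3 => absurd h2 (by decide)
  | 2, 1, 0, 0, 2, h1, h2, h3 => absurd h2 (by decide)
  | 2, 1, 0, 1, 0, h1, h2, h3 => Or.inr (Or.inl ⟨(ot_21010).some⟩)
  | 2, 1, 0, 1, 1, h1, h2, h3 => Or.inl ⟨(ot_21011).some⟩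
  | 2, 1, 0, 1, 2, h1, h2, h3 => Or.inr (Or.inl ⟨(ot_21012).some⟩)
  | 2, 1, 0, 2, 0, h1, h2, h3 => Or.inr (Or.inl ⟨(ot_21020).some⟩)
  | 2, 1, 0, 2, 1, h1, h2, h3 => Or.inr (Or.inl ⟨(ot_21021).some⟩)
  | 2, 1, 0, 2, 2, h1, h2, h3 => Or.inl ⟨(ot_21022).some⟩
  | 2, 1, 1, 0, 0, h1, h2, h3 => Or.inr (Or.inl ⟨(ot_21100).some⟩)
  | 2, 1, 1, 0, 1, h1, h2, h3 => Or.inl ⟨(ot_21101).some⟩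
  | 2, 1, 1, 0, 2, h1, h2, h3 => Or.inr (Or.inl ⟨(ot_21102).some⟩)
  | 2, 1, 1, 1, 0, h1, h2, h3 => absurd h2 (by decide)
  | 2, 1, 1, 1, 1, h1, h2, h3 => absurd h2 (by decide)
  | 2, 1, 1, 1, 2, h1, h2, h3 => absurd h2 (by decide)
  | 2, 1, 1, 2, 0, h1, h2, h3 => absurd (by decide) h3
  | 2, 1, 1, 2, 1, h1, h2, h3 => absurd (by decide) h3
  | 2, 1, 1, 2, 2, h1, h2, h3 => absurd (by decide) h3
  | 2, 1, 2, 0, 0, h1, h2, h3 => Or.inr (Or.inl ⟨(ot_21200).some⟩)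
  | 2, 1, 2, 0, 1, h1, h2, h3 => Or.inr (Or.inl ⟨(ot_21201).some⟩)
  | 2, 1, 2, 0, 2, h1, h2, h3 => Or.inl ⟨(ot_21202).some⟩
  | 2, 1, 2, 1, 0, h1, h2, h3 => absurd (by decide) h3
  | 2, 1, 2, 1, 1, h1, h2, h3 => absurd (by decide) h3
  | 2, 1, 2, 1, 2, h1, h2, h3 => absurd (by decide) h3
  | 2, 1, 2, 2, 0, h1, h2, h3 => absurd h2 (by decide)
  | 2, 1, 2, 2, 1, h1, h2, h3 => absurd h2 (by decide)
  | 2, 1, 2, 2, 2, h1, h2, h3 => absurd h2 (by decide)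
  | 2, 2, 0, 0, 0, h1, h2, h3 => absurd h1 (by decide)
  | 2, 2, 0, 0, 1, h1, h2, h3 => absurd h1 (by decide)
  | 2, 2, 0, 0, 2, h1, h2, h3 => absurd h1 (by decide)
  | 2, 2, 0, 1, 0, h1, h2, h3 => absurd h1 (by decide)
  | 2, 2, 0, 1, 1, h1, h2, h3 => absurd h1 (by decide)
  | 2, 2, 0, 1, 2, h1, h2, h3 => absurd h1 (by decide)
  | 2, 2, 0, 2, 0, h1, h2, h3 => absurd h1 (by decide)
  | 2, 2, 0, 2, 1, h1, h2, h3 => absurd h1 (by decide)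
  | 2, 2, 0, 2, 2, h1, h2, h3 => absurd h1 (by decide)
  | 2, 2, 1, 0, 0, h1, h2, h3 => absurd h1 (by decide)
  | 2, 2, 1, 0, 1, h1, h2, h3 => absurd h1 (by decide)
  | 2, 2, 1, 0, 2, h1, h2, h3 => absurd h1 (by decide)
  | 2, 2, 1, 1, 0, h1, h2, h3 => absurd h1 (by decide)
  | 2, 2, 1, 1, 1, h1, h2, h3 => absurd h1 (by decide)
  | 2, 2, 1, 1, 2, h1, h2, h3 => absurd h1 (by decide)
  | 2, 2, 1, 2, 0, h1, h2, h3 => absurd h1 (by decide)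
  | 2, 2, 1, 2, 1, h1, h2, h3 => absurd h1 (by decide)
  | 2, 2, 1, 2, 2, h1, h2, h3 => absurd h1 (by decide)
  | 2, 2, 2, 0, 0, h1, h2, h3 => absurd h1 (by decide)
  | 2, 2, 2, 0, 1, h1, h2, h3 => absurd h1 (by decide)
  | 2, 2, 2, 0, 2, h1, h2, h3 => absurd h1 (by decide)
  | 2, 2, 2, 1, 0, h1, h2, h3 => absurd h1 (by decide)
  | 2, 2, 2, 1, 1, h1, h2, h3 => absurd h1 (by decide)
  | 2, 2, 2, 1, 2, h1, h2, h3 => absurd h1 (by decide)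
  | 2, 2, 2, 2, 0, h1, h2, h3 => absurd h1 (by decide)
  | 2, 2, 2, 2, 1, h1, h2, h3 => absurd h1 (by decide)
  | 2, 2, 2, 2, 2, h1, h2, h3 => absurd h1 (by decide)

theorem opOneCases (u v a : Fin 3) (h1 : (cycleGraph 3).Adj u v) :
    Nonempty (circOpOne (cycleGraph 3) u v a ≃g K4subTwice) ∨
    Nonempty (circOpOne (cycleGraph 3) u v a ≃g K4subAdj) ∨
    Nonempty (circOpOne (cycleGraph 3) u v a ≃g K4subMatching) :=
  match u, v, a, h1 with
  | 0, 0, 0, h1 => absurd h1 (by decide)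
  | 0, 0, 1, h1 => absurd h1 (by decide)
  | 0, 0, 2, h1 => absurd h1 (by decide)
  | 0, 1, 0, h1 => Or.inl ⟨(oo_010).some⟩
  | 0, 1, 1, h1 => Or.inl ⟨(oo_011).some⟩
  | 0, 1, 2, h1 => Or.inr (Or.inl ⟨(oo_012).some⟩)
  | 0, 2, 0, h1 => Or.inl ⟨(oo_020).some⟩
  | 0, 2, 1, h1 => Or.inr (Or.inl ⟨(oo_021).some⟩)
  | 0, 2, 2, h1 => Or.inl ⟨(oo_022).some⟩
  | 1, 0, 0, h1 => Or.inl ⟨(oo_100).some⟩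
  | 1, 0, 1, h1 => Or.inl ⟨(oo_101).some⟩
  | 1, 0, 2, h1 => Or.inr (Or.inl ⟨(oo_102).some⟩)
  | 1, 1, 0, h1 => absurd h1 (by decide)
  | 1, 1, 1, h1 => absurd h1 (by decide)
  | 1, 1, 2, h1 => absurd h1 (by decide)
  | 1, 2, 0, h1 => Or.inr (Or.inl ⟨(oo_120).some⟩)
  | 1, 2, 1, h1 => Or.inl ⟨(oo_121).some⟩
  | 1, 2, 2, h1 => Or.inl ⟨(oo_122).some⟩
  | 2, 0, 0, h1 => Or.inl ⟨(oo_200).some⟩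
  | 2, 0, 1, h1 => Or.inr (Or.inl ⟨(oo_201).some⟩)
  | 2, 0, 2, h1 => Or.inl ⟨(oo_202).some⟩
  | 2, 1, 0, h1 => Or.inr (Or.inl ⟨(oo_210).some⟩)
  | 2, 1, 1, h1 => Or.inl ⟨(oo_211).some⟩
  | 2, 1, 2, h1 => Or.inl ⟨(oo_212).some⟩
  | 2, 2, 0, h1 => absurd h1 (by decide)
  | 2, 2, 1, h1 => absurd h1 (by decide)
  | 2, 2, 2, h1 => absurd h1 (by decide)

theorem subdivCases (x y : Option (Fin 4)) (h : K4plus.Adj x y) :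
    Nonempty (subdivideEdge K4plus x y ≃g K4subTwice) ∨
    Nonempty (subdivideEdge K4plus x y ≃g K4subAdj) ∨
    Nonempty (subdivideEdge K4plus x y ≃g K4subMatching) :=
  match x, y, h with
  | none, none, h => absurd h (by decide)
  | none, (some 0), h => Or.inl ⟨sd_n0.some⟩
  | none, (some 1), h => Or.inl ⟨sd_n1.some⟩
  | none, (some 2), h => absurd h (by decide)
  | none, (some 3), h => absurd h (by decide)
  | (some 0), none, h => Or.inl ⟨sd_0n.some⟩
  | (some 0), (some 0), h => absurd h (by decide)
  | (some 0), (some 1), h => absurd h (by decide)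
  | (some 0), (some 2), h => Or.inr (Or.inl ⟨sd_02.some⟩)
  | (some 0), (some 3), h => Or.inr (Or.inl ⟨sd_03.some⟩)
  | (some 1), none, h => Or.inl ⟨sd_1n.some⟩
  | (some 1), (some 0), h => absurd h (by decide)
  | (some 1), (some 1), h => absurd h (by decide)
  | (some 1), (some 2), h => Or.inr (Or.inl ⟨sd_12.some⟩)
  | (some 1), (some 3), h => Or.inr (Or.inl ⟨sd_13.some⟩)
  | (some 2), none, h => absurd h (by decide)
  | (some 2), (some 0), h => Or.inr (Or.inl ⟨sd_20.some⟩)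
  | (some 2), (some 1), h => Or.inr (Or.inl ⟨sd_21.some⟩)
  | (some 2), (some 2), h => absurd h (by decide)
  | (some 2), (some 3), h => Or.inr (Or.inr ⟨sd_23.some⟩)
  | (some 3), none, h => absurd h (by decide)
  | (some 3), (some 0), h => Or.inr (Or.inl ⟨sd_30.some⟩)
  | (some 3), (some 1), h => Or.inr (Or.inl ⟨sd_31.some⟩)
  | (some 3), (some 2), h => Or.inr (Or.inr ⟨sd_32.some⟩)
  | (some 3), (some 3), h => absurd h (by decide)
open SimpleGraph

theorem exists_perm {α : Type} [DecidableEq α] {u v x y : α} (huv : u ≠ v) (hxy : x ≠ y) :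
    ∃ σ : α ≃ α, σ u = x ∧ σ v = y := by
  refine ⟨(Equiv.swap u x).trans (Equiv.swap ((Equiv.swap u x) v) y), ?_, ?_⟩
  · have h1 : (Equiv.swap u x) u = x := Equiv.swap_apply_left u x
    have h2 : x ≠ (Equiv.swap u x) v := by
      exact fun hh => huv ((Equiv.swap u x).injective (h1.trans hh))
    simp only [Equiv.trans_apply, h1]
    exact Equiv.swap_apply_of_ne_of_ne h2 hxy
  · simp only [Equiv.trans_apply]
    exact Equiv.swap_apply_left _ _

def topIso {α : Type} (σ : α ≃ α) : (⊤ : SimpleGraph α) ≃g (⊤ : SimpleGraph α) :=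
  ⟨σ, fun {a b} => by simp⟩

theorem subdivideEdge_map' {V W : Type} {G : SimpleGraph V} {H : SimpleGraph W} (e : G ≃g H)
    (u v : V) (x y : W) (hx : e u = x) (hy : e v = y) :
    Nonempty (subdivideEdge G u v ≃g subdivideEdge H x y) :=
  hx ▸ hy ▸ subdivideEdge_map e u v

def Cls (i j : ℕ) {V : Type} (G : SimpleGraph V) : Prop :=
  (i = 0 → False) ∧
  (i = 1 → j = 0 → False) ∧
  (i = 2 → j = 0 → False) ∧
  (i = 3 → j = 0 → Nonempty (G ≃g SimpleGraph.cycleGraph 3)) ∧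
  (i = 1 → j = 1 → Nonempty (G ≃g (⊤ : SimpleGraph (Fin 4)))) ∧
  (i = 2 → j = 1 → Nonempty (G ≃g K4plus)) ∧
  (i = 3 → j = 1 →
    Nonempty (G ≃g K4subTwice) ∨ Nonempty (G ≃g K4subAdj) ∨ Nonempty (G ≃g K4subMatching))

theorem classify {i j : ℕ} {V : Type} {G : SimpleGraph V} (h : IsInF i j G) : Cls i j G := by
  induction h with
  | cycle i hi =>
      refine ⟨fun h => by omega, fun h1 h2 => by omega, fun h1 h2 => by omega,
        fun h3 _ => ?_, fun _ h => absurd h (by omega), fun _ h => absurd h (by omega),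
        fun _ h => absurd h (by omega)⟩
      subst h3; exact ⟨Iso.refl⟩
  | k4 =>
      exact ⟨fun h => by omega, fun _ h => absurd h (by omega), fun h _ => absurd h (by omega),
        fun h _ => absurd h (by omega), fun _ _ => ⟨Iso.refl⟩,
        fun h _ => absurd h (by omega), fun h _ => absurd h (by omega)⟩
  | @subdiv i j V H u v huv hH ih =>
      obtain ⟨c0, c10, c20, c30, c11, c21, c31⟩ := ih
      refine ⟨fun h => by omega, fun h1 h2 => c0 (by omega), fun h1 h2 => c10 (by omega) h2,
        fun h1 h2 => (c20 (by omega) h2).elim, fun h1 h2 => (c0 (by omega)).elim, ?_, ?_⟩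
      · intro h1 h2
        obtain ⟨f⟩ := c11 (by omega) h2
        obtain ⟨g⟩ := subdivideEdge_map f u v
        have hne : f u ≠ f v := fun hh => huv.ne (f.injective hh)
        obtain ⟨σ, hs1, hs2⟩ := exists_perm hne (show (0 : Fin 4) ≠ 1 by decide)
        obtain ⟨g2⟩ := subdivideEdge_map' (topIso σ) (f u) (f v) 0 1 hs1 hs2
        exact ⟨g.trans g2⟩
      · intro h1 h2
        obtain ⟨f⟩ := c21 (by omega) h2
        obtain ⟨g⟩ := subdivideEdge_map f u v
        have hadj : K4plus.Adj (f u) (f v) := f.map_adj_iff.mpr huv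
        rcases subdivCases _ _ hadj with t | t | t
        · exact Or.inl ⟨g.trans t.some⟩
        · exact Or.inr (Or.inl ⟨g.trans t.some⟩)
        · exact Or.inr (Or.inr ⟨g.trans t.some⟩)
  | @op i j V H a G ha hG hH ih =>
      obtain ⟨c0, c10, c20, c30, c11, c21, c31⟩ := ih
      refine ⟨fun h => c0 h, fun h1 h2 => by omega, fun h1 h2 => by omega,
        fun h1 h2 => by omega, fun h1 h2 => (c10 h1 (by omega)).elim,
        fun h1 h2 => (c20 h1 (by omega)).elim, ?_⟩
      intro h1 h2
      obtain ⟨f⟩ := c30 h1 (by omega)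
      rcases hG with ⟨u1, v1, u2, v2, ha1, ha2, hne, rfl⟩ | ⟨u, v, ha1, rfl⟩
      · obtain ⟨g⟩ := circOpTwo_map f u1 v1 u2 v2 a
        have a1 : (cycleGraph 3).Adj (f u1) (f v1) := f.map_adj_iff.mpr ha1
        have a2 : (cycleGraph 3).Adj (f u2) (f v2) := f.map_adj_iff.mpr ha2
        have a3 : s(f u1, f v1) ≠ s(f u2, f v2) := fun hh =>
          hne ((sym2_eq_iff_of_inj f.toEquiv.injective _ _ _ _).mp hh)
        rcases opTwoCases _ _ _ _ (f a) a1 a2 a3 with t | t | t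
        · exact Or.inl ⟨g.trans t.some⟩
        · exact Or.inr (Or.inl ⟨g.trans t.some⟩)
        · exact Or.inr (Or.inr ⟨g.trans t.some⟩)
      · obtain ⟨g⟩ := circOpOne_map f u v a
        have a1 : (cycleGraph 3).Adj (f u) (f v) := f.map_adj_iff.mpr ha1
        rcases opOneCases _ _ (f a) a1 with t | t | t
        · exact Or.inl ⟨g.trans t.some⟩
        · exact Or.inr (Or.inl ⟨g.trans t.some⟩)
        · exact Or.inr (Or.inr ⟨g.trans t.some⟩)
  | @iso i j V W H G e hH ih =>
      obtain ⟨f⟩ := e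
      obtain ⟨c0, c10, c20, c30, c11, c21, c31⟩ := ih
      refine ⟨c0, c10, c20, ?_, ?_, ?_, ?_⟩
      · intro h1 h2; obtain ⟨t⟩ := c30 h1 h2; exact ⟨f.trans t⟩
      · intro h1 h2; obtain ⟨t⟩ := c11 h1 h2; exact ⟨f.trans t⟩
      · intro h1 h2; obtain ⟨t⟩ := c21 h1 h2; exact ⟨f.trans t⟩
      · intro h1 h2
        rcases c31 h1 h2 with t | t | t
        · exact Or.inl ⟨f.trans t.some⟩
        · exact Or.inr (Or.inl ⟨f.trans t.some⟩)
        · exact Or.inr (Or.inr ⟨f.trans t.some⟩)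
open SimpleGraph

theorem four_le_of_no_tri {V : Type} {G : SimpleGraph V}
    (hT : ∀ x y z : V, G.Adj x y → G.Adj y z → G.Adj z x → False)
    {v : V} (w : G.Walk v v) (hw : w.IsCycle) : 4 ≤ w.length := by
  by_contra hlt
  push_neg at hlt
  have hlen := hw.three_le_length
  cases w with
  | nil => simp at hlen
  | cons ha p =>
    cases p with
    | nil => simp at hlen
    | cons hb p =>
      cases p with
      | nil => simp at hlen
      | cons hc p =>
        cases p with
        | nil => exact hT _ _ _ ha hb hc
        | cons hd p => simp only [SimpleGraph.Walk.length_cons] at hlt; omega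

theorem egirth_le_of_cycle {V : Type} {G : SimpleGraph V} {v : V} (w : G.Walk v v)
    (hw : w.IsCycle) : G.egirth ≤ w.length :=
  (iInf_le _ v).trans ((iInf_le _ w).trans (iInf_le _ hw))

def mCycle : K4subMatching.Walk (some (some 0)) (some (some 0)) :=
  Walk.cons (by decide : K4subMatching.Adj (some (some 0)) (some (some 2)))
    (Walk.cons (by decide : K4subMatching.Adj (some (some 2)) none)
      (Walk.cons (by decide : K4subMatching.Adj none (some (some 3)))
        (Walk.cons (by decide : K4subMatching.Adj (some (some 3)) (some (some 0))) Walk.nil)))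

theorem mCycle_isCycle : mCycle.IsCycle := by
  refine ⟨⟨?_, ?_⟩, ?_⟩
  · constructor
    decide
  · simp [mCycle]
  · decide

def tCycle : K4subTwice.Walk (some (some 0)) (some (some 0)) :=
  Walk.cons (by decide : K4subTwice.Adj (some (some 0)) (some (some 2)))
    (Walk.cons (by decide : K4subTwice.Adj (some (some 2)) (some (some 3)))
      (Walk.cons (by decide : K4subTwice.Adj (some (some 3)) (some (some 0))) Walk.nil))

theorem tCycle_isCycle : tCycle.IsCycle := by
  refine ⟨⟨?_, ?_⟩, ?_⟩
  · constructor
    decide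
  · simp [tCycle]
  · decide

def aCycle : K4subAdj.Walk (some (some 1)) (some (some 1)) :=
  Walk.cons (by decide : K4subAdj.Adj (some (some 1)) (some (some 2)))
    (Walk.cons (by decide : K4subAdj.Adj (some (some 2)) (some (some 3)))
      (Walk.cons (by decide : K4subAdj.Adj (some (some 3)) (some (some 1))) Walk.nil))

theorem aCycle_isCycle : aCycle.IsCycle := by
  refine ⟨⟨?_, ?_⟩, ?_⟩
  · constructor
    decide
  · simp [aCycle]
  · decide

theorem girth_matching : 4 ≤ K4subMatching.girth := by
  have hT : ∀ x y z : Option (Option (Fin 4)), K4subMatching.Adj x y → K4subMatching.Adj y z →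
      K4subMatching.Adj z x → False := by decide
  have h4 : (4 : ℕ∞) ≤ K4subMatching.egirth := by
    rw [le_egirth]
    intro a w hw
    exact_mod_cast four_le_of_no_tri hT w hw
  have hfin : K4subMatching.egirth ≠ ⊤ := by
    rw [Ne, egirth_eq_top]
    intro hac
    exact hac mCycle mCycle_isCycle
  have := ENat.toNat_le_toNat h4 hfin
  simpa [girth] using this

theorem girth_of_tri {V : Type} {G : SimpleGraph V} {v : V} (w : G.Walk v v)
    (hw : w.IsCycle) (hlen : w.length = 3) : ¬ (4 ≤ G.girth) := by
  have h3 : G.egirth ≤ 3 := by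
    have := egirth_le_of_cycle w hw
    rwa [hlen] at this
  have h := ENat.toNat_le_toNat h3 (by simp)
  have h2 : G.egirth.toNat ≤ 3 := by simpa using h
  simp only [girth]
  omega
open SimpleGraph

theorem memTwice : IsInF 3 1 K4subTwice :=
  IsInF.subdiv (by decide : K4plus.Adj (some 0) none)
    (IsInF.subdiv (by decide : (⊤ : SimpleGraph (Fin 4)).Adj 0 1) IsInF.k4)

theorem memAdj : IsInF 3 1 K4subAdj :=
  IsInF.subdiv (by decide : K4plus.Adj (some 0) (some 2))
    (IsInF.subdiv (by decide : (⊤ : SimpleGraph (Fin 4)).Adj 0 1) IsInF.k4)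

theorem memMatching : IsInF 3 1 K4subMatching :=
  IsInF.subdiv (by decide : K4plus.Adj (some 2) (some 3))
    (IsInF.subdiv (by decide : (⊤ : SimpleGraph (Fin 4)).Adj 0 1) IsInF.k4)
/-- Every graph in `F_{3,1}` is isomorphic to one of: `K₄` with one edge
subdivided twice, `K₄` with two adjacent edges each subdivided once, or `K₄` with two
non-adjacent edges each subdivided once; each of these three graphs belongs to `F_{3,1}`;
and among them only the perfect-matching subdivision has girth at least four. -/
theorem statement_6 :
    (∀ {V : Type} (G : SimpleGraph V), IsInF 3 1 G →
      (Nonempty (G ≃g K4subTwice) ∨ Nonempty (G ≃g K4subAdj) ∨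
        Nonempty (G ≃g K4subMatching))) ∧
    IsInF 3 1 K4subTwice ∧ IsInF 3 1 K4subAdj ∧ IsInF 3 1 K4subMatching ∧
    4 ≤ K4subMatching.girth ∧ ¬ (4 ≤ K4subTwice.girth) ∧ ¬ (4 ≤ K4subAdj.girth) := by
  refine ⟨fun {V} G h => (classify h).2.2.2.2.2.2 rfl rfl, memTwice, memAdj, memMatching,
    girth_matching, girth_of_tri tCycle tCycle_isCycle rfl, girth_of_tri aCycle aCycle_isCycle rfl⟩
end

section
/- Every graph in F_{3,2} ∪ F_{4,1} has girth at most four, i.e., contains a cycle of length at most four. -/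
open SimpleGraph

section Aux

open Finset

lemma sym2_mem_map_iff {α β : Type*} {f : α → β} {A : Set (Sym2 α)} {x y : β} :
    s(x, y) ∈ Sym2.map f '' A ↔
      ∃ p q, s(p, q) ∈ A ∧ ((x = f p ∧ y = f q) ∨ (x = f q ∧ y = f p)) := by
  constructor
  · rintro ⟨e, he, heq⟩
    induction e using Sym2.ind with
    | _ p q =>
      rw [Sym2.map_pair_eq, Sym2.eq_iff] at heq
      exact ⟨p, q, he, by tauto⟩
  · rintro ⟨p, q, hA, h | h⟩
    · exact ⟨s(p, q), hA, by simp [Sym2.map_pair_eq, h.1, h.2]⟩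
    · exact ⟨s(p, q), hA, by simp [Sym2.map_pair_eq, h.1, h.2, Sym2.eq_swap]⟩

lemma notMem_sym2_map {α β : Type*} {f : α → β} {A : Set (Sym2 α)} {x y : β}
    (hx : ∀ p, x ≠ f p) : s(x, y) ∉ Sym2.map f '' A := by
  rintro ⟨e, -, heq⟩
  induction e using Sym2.ind with
  | _ p q =>
    rw [Sym2.map_pair_eq, Sym2.eq_iff] at heq
    rcases heq with ⟨h, -⟩ | ⟨-, h⟩
    · exact hx p h.symm
    · exact hx q h.symm

/-! ### Edge sets of the three operations -/

lemma subdivideEdge_edgeSet {V : Type} (H : SimpleGraph V) (u v : V) :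
    (subdivideEdge H u v).edgeSet =
      insert s(none, some u) (insert s(none, some v)
        (Sym2.map some '' (H.edgeSet \ {s(u, v)}))) := by
  ext e
  induction e using Sym2.ind with
  | _ x y =>
    simp only [mem_edgeSet, subdivideEdge, fromRel_adj, Set.mem_insert_iff, sym2_mem_map_iff,
      Set.mem_diff, Set.mem_singleton_iff, mem_edgeSet, Sym2.eq_iff]
    constructor
    · rintro ⟨hne, (⟨p, q, rfl, rfl, hadj, hne2⟩ | ⟨rfl, rfl | rfl⟩) |
        (⟨p, q, rfl, rfl, hadj, hne2⟩ | ⟨rfl, rfl | rfl⟩)⟩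
      · exact Or.inr (Or.inr ⟨p, q, ⟨hadj, by simpa [Sym2.eq_iff] using hne2⟩, Or.inl ⟨rfl, rfl⟩⟩)
      · tauto
      · tauto
      · exact Or.inr (Or.inr ⟨p, q, ⟨hadj, by simpa [Sym2.eq_iff] using hne2⟩, Or.inr ⟨rfl, rfl⟩⟩)
      · tauto
      · tauto
    · rintro ((⟨rfl, rfl⟩ | ⟨rfl, rfl⟩) | (⟨rfl, rfl⟩ | ⟨rfl, rfl⟩) |
        ⟨p, q, ⟨hadj, hne2⟩, (⟨rfl, rfl⟩ | ⟨rfl, rfl⟩)⟩)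
      · exact ⟨by simp, Or.inl (Or.inr ⟨rfl, Or.inl rfl⟩)⟩
      · exact ⟨by simp, Or.inr (Or.inr ⟨rfl, Or.inl rfl⟩)⟩
      · exact ⟨by simp, Or.inl (Or.inr ⟨rfl, Or.inr rfl⟩)⟩
      · exact ⟨by simp, Or.inr (Or.inr ⟨rfl, Or.inr rfl⟩)⟩
      · exact ⟨by simp [hadj.ne], Or.inl (Or.inl ⟨p, q, rfl, rfl, hadj,
          by simpa [Sym2.eq_iff] using hne2⟩)⟩
      · exact ⟨by simp [hadj.ne'], Or.inl (Or.inl ⟨q, p, rfl, rfl, hadj.symm, by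
          simp only [Ne, Sym2.eq_iff]; tauto⟩)⟩

set_option maxHeartbeats 1000000 in
lemma circOpOne_edgeSet {V : Type} (H : SimpleGraph V) (u v a : V) :
    (circOpOne H u v a).edgeSet =
      insert s(Sum.inr 0, Sum.inl u) (insert s(Sum.inr 0, Sum.inr 1)
      (insert s(Sum.inr 1, Sum.inl v) (insert s(Sum.inr 2, Sum.inl a)
      (insert s(Sum.inr 2, Sum.inr 0) (insert s(Sum.inr 2, Sum.inr 1)
        (Sym2.map Sum.inl '' (H.edgeSet \ {s(u, v)}))))))) := by
  ext e
  induction e using Sym2.ind with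
  | _ x y =>
    simp only [mem_edgeSet, circOpOne, fromRel_adj, Set.mem_insert_iff, sym2_mem_map_iff,
      Set.mem_diff, Set.mem_singleton_iff, mem_edgeSet, Sym2.eq_iff]
    constructor
    · rintro ⟨hne, h⟩
      obtain (⟨p, q, rfl, rfl, hadj, hne2⟩ | h | h | h) |
        (⟨p, q, rfl, rfl, hadj, hne2⟩ | h | h | h) := h
      · refine Or.inr (Or.inr (Or.inr (Or.inr (Or.inr (Or.inr
          ⟨p, q, ⟨hadj, ?_⟩, Or.inl ⟨rfl, rfl⟩⟩)))))
        simpa [Sym2.eq_iff] using hne2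
      · obtain ⟨rfl, rfl | rfl⟩ := h
        · exact Or.inl (Or.inl ⟨rfl, rfl⟩)
        · exact Or.inr (Or.inl (Or.inl ⟨rfl, rfl⟩))
      · obtain ⟨rfl, rfl⟩ := h
        exact Or.inr (Or.inr (Or.inl (Or.inl ⟨rfl, rfl⟩)))
      · obtain ⟨rfl, rfl | rfl | rfl⟩ := h
        · exact Or.inr (Or.inr (Or.inr (Or.inl (Or.inl ⟨rfl, rfl⟩))))
        · exact Or.inr (Or.inr (Or.inr (Or.inr (Or.inl (Or.inl ⟨rfl, rfl⟩)))))
        · exact Or.inr (Or.inr (Or.inr (Or.inr (Or.inr (Or.inl (Or.inl ⟨rfl, rfl⟩))))))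
      · refine Or.inr (Or.inr (Or.inr (Or.inr (Or.inr (Or.inr
          ⟨p, q, ⟨hadj, ?_⟩, Or.inr ⟨rfl, rfl⟩⟩)))))
        simpa [Sym2.eq_iff] using hne2
      · obtain ⟨rfl, rfl | rfl⟩ := h
        · exact Or.inl (Or.inr ⟨rfl, rfl⟩)
        · exact Or.inr (Or.inl (Or.inr ⟨rfl, rfl⟩))
      · obtain ⟨rfl, rfl⟩ := h
        exact Or.inr (Or.inr (Or.inl (Or.inr ⟨rfl, rfl⟩)))
      · obtain ⟨rfl, rfl | rfl | rfl⟩ := h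
        · exact Or.inr (Or.inr (Or.inr (Or.inl (Or.inr ⟨rfl, rfl⟩))))
        · exact Or.inr (Or.inr (Or.inr (Or.inr (Or.inl (Or.inr ⟨rfl, rfl⟩)))))
        · exact Or.inr (Or.inr (Or.inr (Or.inr (Or.inr (Or.inl (Or.inr ⟨rfl, rfl⟩))))))
    · intro h
      obtain (⟨rfl,rfl⟩|⟨rfl,rfl⟩) | (⟨rfl,rfl⟩|⟨rfl,rfl⟩) | (⟨rfl,rfl⟩|⟨rfl,rfl⟩) |
        (⟨rfl,rfl⟩|⟨rfl,rfl⟩) | (⟨rfl,rfl⟩|⟨rfl,rfl⟩) | (⟨rfl,rfl⟩|⟨rfl,rfl⟩) |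
        ⟨p, q, ⟨hadj, hne2⟩, (⟨rfl,rfl⟩|⟨rfl,rfl⟩)⟩ := h
      · exact ⟨by simp, Or.inl (Or.inr (Or.inl ⟨rfl, Or.inl rfl⟩))⟩
      · exact ⟨by simp, Or.inr (Or.inr (Or.inl ⟨rfl, Or.inl rfl⟩))⟩
      · exact ⟨by simp, Or.inl (Or.inr (Or.inl ⟨rfl, Or.inr rfl⟩))⟩
      · exact ⟨by simp, Or.inr (Or.inr (Or.inl ⟨rfl, Or.inr rfl⟩))⟩
      · exact ⟨by simp, Or.inl (Or.inr (Or.inr (Or.inl ⟨rfl, rfl⟩)))⟩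
      · exact ⟨by simp, Or.inr (Or.inr (Or.inr (Or.inl ⟨rfl, rfl⟩)))⟩
      · exact ⟨by simp, Or.inl (Or.inr (Or.inr (Or.inr ⟨rfl, Or.inl rfl⟩)))⟩
      · exact ⟨by simp, Or.inr (Or.inr (Or.inr (Or.inr ⟨rfl, Or.inl rfl⟩)))⟩
      · exact ⟨by simp, Or.inl (Or.inr (Or.inr (Or.inr ⟨rfl, Or.inr (Or.inl rfl)⟩)))⟩
      · exact ⟨by simp, Or.inr (Or.inr (Or.inr (Or.inr ⟨rfl, Or.inr (Or.inl rfl)⟩)))⟩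
      · exact ⟨by simp, Or.inl (Or.inr (Or.inr (Or.inr ⟨rfl, Or.inr (Or.inr rfl)⟩)))⟩
      · exact ⟨by simp, Or.inr (Or.inr (Or.inr (Or.inr ⟨rfl, Or.inr (Or.inr rfl)⟩)))⟩
      · exact ⟨by simp [hadj.ne], Or.inl (Or.inl ⟨p, q, rfl, rfl, hadj,
          by simpa [Sym2.eq_iff] using hne2⟩)⟩
      · exact ⟨by simp [hadj.ne'], Or.inl (Or.inl ⟨q, p, rfl, rfl, hadj.symm, by
          simp only [Ne, Sym2.eq_iff]; tauto⟩)⟩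

set_option maxHeartbeats 1000000 in
lemma circOpTwo_edgeSet {V : Type} (H : SimpleGraph V) (u₁ v₁ u₂ v₂ a : V) :
    (circOpTwo H u₁ v₁ u₂ v₂ a).edgeSet =
      insert s(Sum.inr 0, Sum.inl u₁) (insert s(Sum.inr 0, Sum.inl v₁)
      (insert s(Sum.inr 1, Sum.inl u₂) (insert s(Sum.inr 1, Sum.inl v₂)
      (insert s(Sum.inr 2, Sum.inl a) (insert s(Sum.inr 2, Sum.inr 0)
      (insert s(Sum.inr 2, Sum.inr 1)
        (Sym2.map Sum.inl '' (H.edgeSet \ {s(u₁, v₁), s(u₂, v₂)})))))))) := by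
  ext e
  induction e using Sym2.ind with
  | _ x y =>
    simp only [mem_edgeSet, circOpTwo, fromRel_adj, Set.mem_insert_iff, sym2_mem_map_iff,
      Set.mem_diff, Set.mem_singleton_iff, mem_edgeSet, Sym2.eq_iff, not_or]
    constructor
    · rintro ⟨hne, h⟩
      obtain (⟨p, q, rfl, rfl, hadj, hne2, hne3⟩ | h | h | h) |
        (⟨p, q, rfl, rfl, hadj, hne2, hne3⟩ | h | h | h) := h
      · refine Or.inr (Or.inr (Or.inr (Or.inr (Or.inr (Or.inr (Or.inr
          ⟨p, q, ⟨hadj, ?_, ?_⟩, Or.inl ⟨rfl, rfl⟩⟩))))))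
        · simpa [Sym2.eq_iff] using hne2
        · simpa [Sym2.eq_iff] using hne3
      · obtain ⟨rfl, rfl | rfl⟩ := h
        · exact Or.inl (Or.inl ⟨rfl, rfl⟩)
        · exact Or.inr (Or.inl (Or.inl ⟨rfl, rfl⟩))
      · obtain ⟨rfl, rfl | rfl⟩ := h
        · exact Or.inr (Or.inr (Or.inl (Or.inl ⟨rfl, rfl⟩)))
        · exact Or.inr (Or.inr (Or.inr (Or.inl (Or.inl ⟨rfl, rfl⟩))))
      · obtain ⟨rfl, rfl | rfl | rfl⟩ := h
        · exact Or.inr (Or.inr (Or.inr (Or.inr (Or.inl (Or.inl ⟨rfl, rfl⟩)))))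
        · exact Or.inr (Or.inr (Or.inr (Or.inr (Or.inr (Or.inl (Or.inl ⟨rfl, rfl⟩))))))
        · exact Or.inr (Or.inr (Or.inr (Or.inr (Or.inr (Or.inr (Or.inl (Or.inl ⟨rfl, rfl⟩)))))))
      · refine Or.inr (Or.inr (Or.inr (Or.inr (Or.inr (Or.inr (Or.inr
          ⟨p, q, ⟨hadj, ?_, ?_⟩, Or.inr ⟨rfl, rfl⟩⟩))))))
        · simpa [Sym2.eq_iff] using hne2
        · simpa [Sym2.eq_iff] using hne3
      · obtain ⟨rfl, rfl | rfl⟩ := h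
        · exact Or.inl (Or.inr ⟨rfl, rfl⟩)
        · exact Or.inr (Or.inl (Or.inr ⟨rfl, rfl⟩))
      · obtain ⟨rfl, rfl | rfl⟩ := h
        · exact Or.inr (Or.inr (Or.inl (Or.inr ⟨rfl, rfl⟩)))
        · exact Or.inr (Or.inr (Or.inr (Or.inl (Or.inr ⟨rfl, rfl⟩))))
      · obtain ⟨rfl, rfl | rfl | rfl⟩ := h
        · exact Or.inr (Or.inr (Or.inr (Or.inr (Or.inl (Or.inr ⟨rfl, rfl⟩)))))
        · exact Or.inr (Or.inr (Or.inr (Or.inr (Or.inr (Or.inl (Or.inr ⟨rfl, rfl⟩))))))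
        · exact Or.inr (Or.inr (Or.inr (Or.inr (Or.inr (Or.inr (Or.inl (Or.inr ⟨rfl, rfl⟩)))))))
    · intro h
      obtain (⟨rfl,rfl⟩|⟨rfl,rfl⟩) | (⟨rfl,rfl⟩|⟨rfl,rfl⟩) | (⟨rfl,rfl⟩|⟨rfl,rfl⟩) |
        (⟨rfl,rfl⟩|⟨rfl,rfl⟩) | (⟨rfl,rfl⟩|⟨rfl,rfl⟩) | (⟨rfl,rfl⟩|⟨rfl,rfl⟩) |
        (⟨rfl,rfl⟩|⟨rfl,rfl⟩) | ⟨p, q, ⟨hadj, hne2, hne3⟩, (⟨rfl,rfl⟩|⟨rfl,rfl⟩)⟩ := h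
      · exact ⟨by simp, Or.inl (Or.inr (Or.inl ⟨rfl, Or.inl rfl⟩))⟩
      · exact ⟨by simp, Or.inr (Or.inr (Or.inl ⟨rfl, Or.inl rfl⟩))⟩
      · exact ⟨by simp, Or.inl (Or.inr (Or.inl ⟨rfl, Or.inr rfl⟩))⟩
      · exact ⟨by simp, Or.inr (Or.inr (Or.inl ⟨rfl, Or.inr rfl⟩))⟩
      · exact ⟨by simp, Or.inl (Or.inr (Or.inr (Or.inl ⟨rfl, Or.inl rfl⟩)))⟩
      · exact ⟨by simp, Or.inr (Or.inr (Or.inr (Or.inl ⟨rfl, Or.inl rfl⟩)))⟩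
      · exact ⟨by simp, Or.inl (Or.inr (Or.inr (Or.inl ⟨rfl, Or.inr rfl⟩)))⟩
      · exact ⟨by simp, Or.inr (Or.inr (Or.inr (Or.inl ⟨rfl, Or.inr rfl⟩)))⟩
      · exact ⟨by simp, Or.inl (Or.inr (Or.inr (Or.inr ⟨rfl, Or.inl rfl⟩)))⟩
      · exact ⟨by simp, Or.inr (Or.inr (Or.inr (Or.inr ⟨rfl, Or.inl rfl⟩)))⟩
      · exact ⟨by simp, Or.inl (Or.inr (Or.inr (Or.inr ⟨rfl, Or.inr (Or.inl rfl)⟩)))⟩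
      · exact ⟨by simp, Or.inr (Or.inr (Or.inr (Or.inr ⟨rfl, Or.inr (Or.inl rfl)⟩)))⟩
      · exact ⟨by simp, Or.inl (Or.inr (Or.inr (Or.inr ⟨rfl, Or.inr (Or.inr rfl)⟩)))⟩
      · exact ⟨by simp, Or.inr (Or.inr (Or.inr (Or.inr ⟨rfl, Or.inr (Or.inr rfl)⟩)))⟩
      · exact ⟨by simp [hadj.ne], Or.inl (Or.inl ⟨p, q, rfl, rfl, hadj,
          by simp only [Ne, Sym2.eq_iff]; tauto, by simp only [Ne, Sym2.eq_iff]; tauto⟩)⟩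
      · exact ⟨by simp [hadj.ne'], Or.inl (Or.inl ⟨q, p, rfl, rfl, hadj.symm,
          by simp only [Ne, Sym2.eq_iff]; tauto, by simp only [Ne, Sym2.eq_iff]; tauto⟩)⟩

/-! ### Edge counts -/

lemma subdivideEdge_ncard {V : Type} [Finite V] {H : SimpleGraph V} {u v : V} (huv : H.Adj u v) :
    (subdivideEdge H u v).edgeSet.ncard = H.edgeSet.ncard + 1 := by
  rw [subdivideEdge_edgeSet]
  have h1 : s((none : Option V), some v) ∉ Sym2.map some '' (H.edgeSet \ {s(u, v)}) :=
    notMem_sym2_map (by simp)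
  have h2 : s((none : Option V), some u) ∉ insert s(none, some v)
      (Sym2.map some '' (H.edgeSet \ {s(u, v)})) := by
    simp only [Set.mem_insert_iff, not_or]
    exact ⟨by simp [Sym2.eq_iff, huv.ne], notMem_sym2_map (by simp)⟩
  have hpos : 0 < H.edgeSet.ncard :=
    (Set.ncard_pos (Set.toFinite _)).mpr ⟨_, (mem_edgeSet H).mpr huv⟩
  rw [Set.ncard_insert_of_notMem h2, Set.ncard_insert_of_notMem h1,
    Set.ncard_image_of_injective _ (Sym2.map.injective (Option.some_injective V)),
    Set.ncard_diff_singleton_of_mem ((mem_edgeSet H).mpr huv)]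
  omega

lemma circOpOne_ncard {V : Type} [Finite V] {H : SimpleGraph V} {u v : V} (a : V)
    (huv : H.Adj u v) :
    (circOpOne H u v a).edgeSet.ncard = H.edgeSet.ncard + 5 := by
  rw [circOpOne_edgeSet]
  have him : ∀ (k : Fin 3) (y : V ⊕ Fin 3),
      s(Sum.inr k, y) ∉ Sym2.map Sum.inl '' (H.edgeSet \ {s(u, v)}) :=
    fun k y => notMem_sym2_map (by simp)
  have n5 : s((Sum.inr 2 : V ⊕ Fin 3), Sum.inr 0) ∉ insert s(Sum.inr 2, Sum.inr 1)
      (Sym2.map Sum.inl '' (H.edgeSet \ {s(u, v)})) := by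
    simp only [Set.mem_insert_iff, not_or]
    exact ⟨by simp [Sym2.eq_iff], him 2 _⟩
  have n4 : s((Sum.inr 2 : V ⊕ Fin 3), Sum.inl a) ∉ insert s(Sum.inr 2, Sum.inr 0)
      (insert s(Sum.inr 2, Sum.inr 1) (Sym2.map Sum.inl '' (H.edgeSet \ {s(u, v)}))) := by
    simp only [Set.mem_insert_iff, not_or]
    exact ⟨by simp [Sym2.eq_iff], by simp [Sym2.eq_iff], him 2 _⟩
  have n3 : s((Sum.inr 1 : V ⊕ Fin 3), Sum.inl v) ∉ insert s(Sum.inr 2, Sum.inl a)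
      (insert s(Sum.inr 2, Sum.inr 0) (insert s(Sum.inr 2, Sum.inr 1)
      (Sym2.map Sum.inl '' (H.edgeSet \ {s(u, v)})))) := by
    simp only [Set.mem_insert_iff, not_or]
    exact ⟨by simp [Sym2.eq_iff], by simp [Sym2.eq_iff], by simp [Sym2.eq_iff], him 1 _⟩
  have n2 : s((Sum.inr 0 : V ⊕ Fin 3), Sum.inr 1) ∉ insert s(Sum.inr 1, Sum.inl v)
      (insert s(Sum.inr 2, Sum.inl a) (insert s(Sum.inr 2, Sum.inr 0)
      (insert s(Sum.inr 2, Sum.inr 1) (Sym2.map Sum.inl '' (H.edgeSet \ {s(u, v)}))))) := by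
    simp only [Set.mem_insert_iff, not_or]
    exact ⟨by simp [Sym2.eq_iff], by simp [Sym2.eq_iff], by simp [Sym2.eq_iff],
      by simp [Sym2.eq_iff], him 0 _⟩
  have n1 : s((Sum.inr 0 : V ⊕ Fin 3), Sum.inl u) ∉ insert s(Sum.inr 0, Sum.inr 1)
      (insert s(Sum.inr 1, Sum.inl v) (insert s(Sum.inr 2, Sum.inl a)
      (insert s(Sum.inr 2, Sum.inr 0) (insert s(Sum.inr 2, Sum.inr 1)
      (Sym2.map Sum.inl '' (H.edgeSet \ {s(u, v)})))))) := by
    simp only [Set.mem_insert_iff, not_or]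
    exact ⟨by simp [Sym2.eq_iff], by simp [Sym2.eq_iff], by simp [Sym2.eq_iff],
      by simp [Sym2.eq_iff], by simp [Sym2.eq_iff], him 0 _⟩
  rw [Set.ncard_insert_of_notMem n1, Set.ncard_insert_of_notMem n2,
    Set.ncard_insert_of_notMem n3, Set.ncard_insert_of_notMem n4,
    Set.ncard_insert_of_notMem n5, Set.ncard_insert_of_notMem (him 2 _),
    Set.ncard_image_of_injective _ (Sym2.map.injective Sum.inl_injective),
    Set.ncard_diff_singleton_of_mem ((mem_edgeSet H).mpr huv)]
  have hpos : 0 < H.edgeSet.ncard :=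
    (Set.ncard_pos (Set.toFinite _)).mpr ⟨_, (mem_edgeSet H).mpr huv⟩
  omega

lemma circOpTwo_ncard {V : Type} [Finite V] {H : SimpleGraph V} {u₁ v₁ u₂ v₂ : V} (a : V)
    (h1 : H.Adj u₁ v₁) (h2 : H.Adj u₂ v₂) (hne : s(u₁, v₁) ≠ s(u₂, v₂)) :
    (circOpTwo H u₁ v₁ u₂ v₂ a).edgeSet.ncard = H.edgeSet.ncard + 5 := by
  rw [circOpTwo_edgeSet]
  have him : ∀ (k : Fin 3) (y : V ⊕ Fin 3),
      s(Sum.inr k, y) ∉ Sym2.map Sum.inl '' (H.edgeSet \ {s(u₁, v₁), s(u₂, v₂)}) :=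
    fun k y => notMem_sym2_map (by simp)
  have n6 : s((Sum.inr 2 : V ⊕ Fin 3), Sum.inr 0) ∉ insert s(Sum.inr 2, Sum.inr 1)
      (Sym2.map Sum.inl '' (H.edgeSet \ {s(u₁, v₁), s(u₂, v₂)})) := by
    simp only [Set.mem_insert_iff, not_or]
    exact ⟨by simp [Sym2.eq_iff], him 2 _⟩
  have n5 : s((Sum.inr 2 : V ⊕ Fin 3), Sum.inl a) ∉ insert s(Sum.inr 2, Sum.inr 0)
      (insert s(Sum.inr 2, Sum.inr 1)
      (Sym2.map Sum.inl '' (H.edgeSet \ {s(u₁, v₁), s(u₂, v₂)}))) := by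
    simp only [Set.mem_insert_iff, not_or]
    exact ⟨by simp [Sym2.eq_iff], by simp [Sym2.eq_iff], him 2 _⟩
  have n4 : s((Sum.inr 1 : V ⊕ Fin 3), Sum.inl v₂) ∉ insert s(Sum.inr 2, Sum.inl a)
      (insert s(Sum.inr 2, Sum.inr 0) (insert s(Sum.inr 2, Sum.inr 1)
      (Sym2.map Sum.inl '' (H.edgeSet \ {s(u₁, v₁), s(u₂, v₂)})))) := by
    simp only [Set.mem_insert_iff, not_or]
    exact ⟨by simp [Sym2.eq_iff], by simp [Sym2.eq_iff], by simp [Sym2.eq_iff], him 1 _⟩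
  have n3 : s((Sum.inr 1 : V ⊕ Fin 3), Sum.inl u₂) ∉ insert s(Sum.inr 1, Sum.inl v₂)
      (insert s(Sum.inr 2, Sum.inl a) (insert s(Sum.inr 2, Sum.inr 0)
      (insert s(Sum.inr 2, Sum.inr 1)
      (Sym2.map Sum.inl '' (H.edgeSet \ {s(u₁, v₁), s(u₂, v₂)}))))) := by
    simp only [Set.mem_insert_iff, not_or]
    refine ⟨?_, by simp [Sym2.eq_iff], by simp [Sym2.eq_iff], by simp [Sym2.eq_iff], him 1 _⟩
    simp only [Sym2.eq_iff]
    rintro (⟨-, h⟩ | ⟨h, -⟩)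
    · exact h2.ne (Sum.inl_injective h)
    · simp at h
  have n2 : s((Sum.inr 0 : V ⊕ Fin 3), Sum.inl v₁) ∉ insert s(Sum.inr 1, Sum.inl u₂)
      (insert s(Sum.inr 1, Sum.inl v₂) (insert s(Sum.inr 2, Sum.inl a)
      (insert s(Sum.inr 2, Sum.inr 0) (insert s(Sum.inr 2, Sum.inr 1)
      (Sym2.map Sum.inl '' (H.edgeSet \ {s(u₁, v₁), s(u₂, v₂)})))))) := by
    simp only [Set.mem_insert_iff, not_or]
    exact ⟨by simp [Sym2.eq_iff], by simp [Sym2.eq_iff], by simp [Sym2.eq_iff],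
      by simp [Sym2.eq_iff], by simp [Sym2.eq_iff], him 0 _⟩
  have n1 : s((Sum.inr 0 : V ⊕ Fin 3), Sum.inl u₁) ∉ insert s(Sum.inr 0, Sum.inl v₁)
      (insert s(Sum.inr 1, Sum.inl u₂) (insert s(Sum.inr 1, Sum.inl v₂)
      (insert s(Sum.inr 2, Sum.inl a) (insert s(Sum.inr 2, Sum.inr 0)
      (insert s(Sum.inr 2, Sum.inr 1)
      (Sym2.map Sum.inl '' (H.edgeSet \ {s(u₁, v₁), s(u₂, v₂)}))))))) := by
    simp only [Set.mem_insert_iff, not_or]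
    refine ⟨?_, by simp [Sym2.eq_iff], by simp [Sym2.eq_iff], by simp [Sym2.eq_iff],
      by simp [Sym2.eq_iff], by simp [Sym2.eq_iff], him 0 _⟩
    simp only [Sym2.eq_iff]
    rintro (⟨-, h⟩ | ⟨h, -⟩)
    · exact h1.ne (Sum.inl_injective h)
    · simp at h
  have hdiff : H.edgeSet \ {s(u₁, v₁), s(u₂, v₂)} = (H.edgeSet \ {s(u₁, v₁)}) \ {s(u₂, v₂)} := by
    rw [Set.diff_diff, Set.singleton_union]
  have hmem2 : s(u₂, v₂) ∈ H.edgeSet \ {s(u₁, v₁)} :=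
    ⟨(mem_edgeSet H).mpr h2, by simpa using hne.symm⟩
  have hc1 : (H.edgeSet \ {s(u₁, v₁)}).ncard + 1 = H.edgeSet.ncard :=
    Set.ncard_diff_singleton_add_one ((mem_edgeSet H).mpr h1) (Set.toFinite _)
  have hc2 : ((H.edgeSet \ {s(u₁, v₁)}) \ {s(u₂, v₂)}).ncard + 1
      = (H.edgeSet \ {s(u₁, v₁)}).ncard :=
    Set.ncard_diff_singleton_add_one hmem2 (Set.toFinite _)
  rw [Set.ncard_insert_of_notMem n1, Set.ncard_insert_of_notMem n2,
    Set.ncard_insert_of_notMem n3, Set.ncard_insert_of_notMem n4,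
    Set.ncard_insert_of_notMem n5, Set.ncard_insert_of_notMem n6,
    Set.ncard_insert_of_notMem (him 2 _),
    Set.ncard_image_of_injective _ (Sym2.map.injective Sum.inl_injective), hdiff]
  omega

/-! ### Short cycles from triangles and squares -/

lemma triangle_short_cycle {V : Type} {G : SimpleGraph V} {a b c : V}
    (h1 : G.Adj a b) (h2 : G.Adj b c) (h3 : G.Adj c a) :
    ∃ (u : V) (w : G.Walk u u), w.IsCycle ∧ w.length ≤ 4 := by
  refine ⟨a, Walk.cons h1 (Walk.cons h2 (Walk.cons h3 Walk.nil)), ?_, by simp⟩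
  simp [Walk.isCycle_def, Walk.isTrail_def, Sym2.eq_iff, h1.ne, h2.ne, h3.ne,
    h1.ne', h2.ne', h3.ne']

lemma square_short_cycle {V : Type} {G : SimpleGraph V} {a b c d : V}
    (h1 : G.Adj a b) (h2 : G.Adj b c) (h3 : G.Adj c d) (h4 : G.Adj d a)
    (hac : a ≠ c) (hbd : b ≠ d) :
    ∃ (u : V) (w : G.Walk u u), w.IsCycle ∧ w.length ≤ 4 := by
  refine ⟨a, Walk.cons h1 (Walk.cons h2 (Walk.cons h3 (Walk.cons h4 Walk.nil))), ?_, by simp⟩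
  simp [Walk.isCycle_def, Walk.isTrail_def, Sym2.eq_iff, h1.ne, h2.ne, h3.ne, h4.ne,
    h1.ne', h2.ne', h3.ne', h4.ne', hac, hbd, hac.symm, hbd.symm]

/-! ### The extremal counting argument -/

lemma neighbor_degree_sum_le {V : Type} [Fintype V] [DecidableEq V] (G : SimpleGraph V)
    [DecidableRel G.Adj]
    (ht : ∀ a b c : V, G.Adj a b → G.Adj b c → G.Adj c a → False)
    (hq : ∀ a b c d : V, G.Adj a b → G.Adj b c → G.Adj c d → G.Adj d a →
      a ≠ c → b ≠ d → False)
    (v : V) : ∑ u ∈ G.neighborFinset v, G.degree u ≤ Fintype.card V - 1 := by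
  set f : V → V → V := fun u w => if w = v then u else w with hf
  have hdisj : ∀ u₁ ∈ G.neighborFinset v, ∀ u₂ ∈ G.neighborFinset v, u₁ ≠ u₂ →
      Disjoint ((G.neighborFinset u₁).image (f u₁)) ((G.neighborFinset u₂).image (f u₂)) := by
    intro u₁ hu₁ u₂ hu₂ hu12
    rw [mem_neighborFinset] at hu₁ hu₂
    rw [Finset.disjoint_left]
    rintro x hx hx'
    obtain ⟨w, hw, hfw⟩ := Finset.mem_image.mp hx
    obtain ⟨w', hw', hfw'⟩ := Finset.mem_image.mp hx'
    rw [mem_neighborFinset] at hw hw'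
    by_cases hwv : w = v <;> by_cases hw'v : w' = v
    · apply hu12
      simp only [hf, hwv, if_pos rfl] at hfw
      simp only [hf, hw'v, if_pos rfl] at hfw'
      rw [hfw, hfw']
    · simp only [hf, hwv, if_pos rfl] at hfw
      simp only [hf, if_neg hw'v] at hfw'
      have hwu : w' = u₁ := hfw'.trans hfw.symm
      have h21 : G.Adj u₂ u₁ := by rwa [hwu] at hw'
      exact ht v u₁ u₂ hu₁ h21.symm hu₂.symm
    · simp only [hf, hw'v, if_pos rfl] at hfw'
      simp only [hf, if_neg hwv] at hfw
      have hwu : w = u₂ := hfw.trans hfw'.symm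
      have h12 : G.Adj u₁ u₂ := by rwa [hwu] at hw
      exact ht v u₁ u₂ hu₁ h12 hu₂.symm
    · simp only [hf, if_neg hwv] at hfw
      simp only [hf, if_neg hw'v] at hfw'
      have hww : w = w' := hfw.trans hfw'.symm
      have hw2 : G.Adj w u₂ := by
        rw [hww]; exact hw'.symm
      exact hq v u₁ w u₂ hu₁ hw hw2 hu₂.symm (fun h => hwv h.symm) hu12
  have hinj : ∀ u ∈ G.neighborFinset v, Set.InjOn (f u) (G.neighborFinset u) := by
    intro u hu w hw w' hw' hww
    simp only [Finset.coe_sort_coe, Finset.mem_coe, mem_neighborFinset] at hw hw'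
    by_cases hwv : w = v <;> by_cases hw'v : w' = v
    · rw [hwv, hw'v]
    · simp only [hf, hwv, if_pos rfl, if_neg hw'v] at hww
      exact absurd hww.symm hw'.ne'
    · simp only [hf, hw'v, if_pos rfl, if_neg hwv] at hww
      exact absurd hww hw.ne'
    · simpa only [hf, if_neg hwv, if_neg hw'v] using hww
  have hcard : ∑ u ∈ G.neighborFinset v, G.degree u =
      ((G.neighborFinset v).biUnion (fun u => (G.neighborFinset u).image (f u))).card := by
    rw [Finset.card_biUnion hdisj]
    refine Finset.sum_congr rfl fun u hu => ?_
    rw [Finset.card_image_of_injOn (hinj u hu)]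
    rfl
  rw [hcard]
  have hsub : ((G.neighborFinset v).biUnion (fun u => (G.neighborFinset u).image (f u)))
      ⊆ Finset.univ.erase v := by
    intro x hx
    obtain ⟨u, hu, hx⟩ := Finset.mem_biUnion.mp hx
    obtain ⟨w, hw, hfw⟩ := Finset.mem_image.mp hx
    rw [mem_neighborFinset] at hu hw
    refine Finset.mem_erase.mpr ⟨?_, Finset.mem_univ _⟩
    by_cases hwv : w = v
    · simp only [hf, hwv, if_pos rfl] at hfw
      rw [← hfw]; exact hu.ne'
    · simp only [hf, if_neg hwv] at hfw
      rw [← hfw]; exact hwv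
  calc _ ≤ (Finset.univ.erase v).card := Finset.card_le_card hsub
    _ = Fintype.card V - 1 := by rw [Finset.card_erase_of_mem (Finset.mem_univ v),
          Finset.card_univ]

lemma sum_deg_sq {V : Type} [Fintype V] [DecidableEq V] (G : SimpleGraph V)
    [DecidableRel G.Adj] :
    ∑ v : V, ∑ u ∈ G.neighborFinset v, G.degree u = ∑ u : V, G.degree u * G.degree u := by
  have h1 : ∀ v : V, ∑ u ∈ G.neighborFinset v, G.degree u
      = ∑ u : V, if G.Adj v u then G.degree u else 0 := by
    intro v
    rw [neighborFinset_eq_filter, Finset.sum_filter]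
  calc ∑ v : V, ∑ u ∈ G.neighborFinset v, G.degree u
      = ∑ v : V, ∑ u : V, if G.Adj v u then G.degree u else 0 :=
        Finset.sum_congr rfl fun v _ => h1 v
    _ = ∑ u : V, ∑ v : V, if G.Adj v u then G.degree u else 0 := Finset.sum_comm
    _ = ∑ u : V, G.degree u * G.degree u := by
        refine Finset.sum_congr rfl fun u _ => ?_
        rw [← Finset.sum_filter]
        have : Finset.univ.filter (fun v => G.Adj v u) = G.neighborFinset u := by
          rw [neighborFinset_eq_filter]
          exact Finset.filter_congr fun v _ => by rw [adj_comm]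
        rw [this, Finset.sum_const, degree, smul_eq_mul]

lemma short_cycle_of_many_edges {V : Type} [Fintype V] (G : SimpleGraph V)
    (hcnt : Fintype.card V ^ 2 + 8 * Fintype.card V < 12 * G.edgeSet.ncard) :
    ∃ (u : V) (c : G.Walk u u), c.IsCycle ∧ c.length ≤ 4 := by
  classical
  by_contra hno
  push_neg at hno
  have ht : ∀ a b c : V, G.Adj a b → G.Adj b c → G.Adj c a → False := by
    intro a b c h1 h2 h3
    obtain ⟨u, w, hw, hlen⟩ := triangle_short_cycle h1 h2 h3
    exact absurd hlen (by simpa using (hno u w hw).not_ge)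
  have hq : ∀ a b c d : V, G.Adj a b → G.Adj b c → G.Adj c d → G.Adj d a →
      a ≠ c → b ≠ d → False := by
    intro a b c d h1 h2 h3 h4 hac hbd
    obtain ⟨u, w, hw, hlen⟩ := square_short_cycle h1 h2 h3 h4 hac hbd
    exact absurd hlen (by simpa using (hno u w hw).not_ge)
  set n := Fintype.card V with hn
  have key : ∑ u : V, G.degree u * G.degree u ≤ n * (n - 1) := by
    rw [← sum_deg_sq]
    calc ∑ v : V, ∑ u ∈ G.neighborFinset v, G.degree u
        ≤ ∑ _v : V, (n - 1) :=
          Finset.sum_le_sum fun v _ => neighbor_degree_sum_le G ht hq v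
      _ = n * (n - 1) := by rw [Finset.sum_const, Finset.card_univ, smul_eq_mul]
  have s4 : ∑ u : V, 6 * G.degree u ≤ ∑ u : V, (G.degree u * G.degree u + 9) :=
    Finset.sum_le_sum fun u _ => by
      have : (0:ℤ) ≤ ((G.degree u : ℤ) - 3) ^ 2 := sq_nonneg _
      zify
      nlinarith [this]
  have s5 : ∑ u : V, 6 * G.degree u = 6 * (2 * G.edgeFinset.card) := by
    rw [← Finset.mul_sum, G.sum_degrees_eq_twice_card_edges]
  have s6 : ∑ u : V, (G.degree u * G.degree u + 9) =
      (∑ u : V, G.degree u * G.degree u) + 9 * n := by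
    rw [Finset.sum_add_distrib, Finset.sum_const, Finset.card_univ, smul_eq_mul, mul_comm]
  have s7 : G.edgeFinset.card = G.edgeSet.ncard := (Set.ncard_eq_toFinset_card' _).symm
  have s8 : n * (n - 1) + n = n * n := by
    cases n with
    | zero => simp
    | succ k => simp [Nat.succ_sub_one]; ring
  have s9 : n ^ 2 = n * n := sq n
  omega

end Aux

lemma count_inv {i j : ℕ} {V : Type} {G : SimpleGraph V} (h : IsInF i j G) :
    Nonempty (V ≃ Fin (i + 3 * j)) ∧ G.edgeSet.ncard = i + 5 * j := by
  induction h with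
  | cycle i hi =>
      obtain ⟨n, rfl⟩ : ∃ n, i = n + 3 := ⟨i - 3, by omega⟩
      refine ⟨⟨finCongr (by omega)⟩, ?_⟩
      have hdeg : ∑ v : Fin (n+3), (cycleGraph (n+3)).degree v = (n+3) * 2 := by
        rw [Finset.sum_congr rfl fun v _ => cycleGraph_degree_three_le]
        rw [Finset.sum_const, Finset.card_univ, smul_eq_mul, Fintype.card_fin]
      rw [sum_degrees_eq_twice_card_edges] at hdeg
      rw [Set.ncard_eq_toFinset_card']
      have : (cycleGraph (n+3)).edgeSet.toFinset = (cycleGraph (n+3)).edgeFinset := rfl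
      rw [this]
      omega
  | k4 =>
      refine ⟨⟨finCongr rfl⟩, ?_⟩
      rw [Set.ncard_eq_toFinset_card']
      have : (⊤ : SimpleGraph (Fin 4)).edgeSet.toFinset
          = (⊤ : SimpleGraph (Fin 4)).edgeFinset := rfl
      rw [this, card_edgeFinset_top_eq_card_choose_two]
      decide
  | subdiv huv hH ih =>
      obtain ⟨⟨e⟩, hm⟩ := ih
      haveI : Finite _ := Finite.intro e
      refine ⟨⟨(e.optionCongr).trans (((finSuccEquiv _).symm).trans (finCongr (by omega)))⟩, ?_⟩
      rw [subdivideEdge_ncard huv, hm]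
      omega
  | op ha hG hH ih =>
      obtain ⟨⟨e⟩, hm⟩ := ih
      haveI : Finite _ := Finite.intro e
      refine ⟨⟨(Equiv.sumCongr e (Equiv.refl (Fin 3))).trans
        (finSumFinEquiv.trans (finCongr (by omega)))⟩, ?_⟩
      rcases hG with ⟨u₁, v₁, u₂, v₂, h1, h2, hne, rfl⟩ | ⟨u, v, huv, rfl⟩
      · rw [circOpTwo_ncard _ h1 h2 hne, hm]; omega
      · rw [circOpOne_ncard _ huv, hm]; omega
  | iso e hH ih =>
      obtain ⟨⟨eq⟩, hm⟩ := ih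
      obtain ⟨iso⟩ := e
      refine ⟨⟨iso.toEquiv.trans eq⟩, ?_⟩
      rw [← Nat.card_coe_set_eq, Nat.card_congr iso.mapEdgeSet,
        Nat.card_coe_set_eq, hm]

/-- Every graph in `F_{3,2} ∪ F_{4,1}` has girth at most four, i.e., contains a
cycle of length at most four. -/
theorem statement_9 {V : Type} (G : SimpleGraph V) (hG : IsInF 3 2 G ∨ IsInF 4 1 G) :
    ∃ (u : V) (c : G.Walk u u), c.IsCycle ∧ c.length ≤ 4 := by
  rcases hG with h | h
  · obtain ⟨⟨e⟩, hm⟩ := count_inv h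
    haveI : Fintype V := Fintype.ofEquiv _ e.symm
    have hcard : Fintype.card V = 9 := by
      rw [Fintype.card_congr e, Fintype.card_fin]
    apply short_cycle_of_many_edges
    rw [hcard, hm]
    norm_num
  · obtain ⟨⟨e⟩, hm⟩ := count_inv h
    haveI : Fintype V := Fintype.ofEquiv _ e.symm
    have hcard : Fintype.card V = 7 := by
      rw [Fintype.card_congr e, Fintype.card_fin]
    apply short_cycle_of_many_edges
    rw [hcard, hm]
    norm_num
end
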